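/- arXiv:1107.4965 — 6 statements merged into one kernel-verified Lean document; each statement's English description precedes it below -/
import Mathlib

section
/- For every q-ary DMC W (q = 2^r), the symmetric capacity satisfies the lower bound I(W) ≥ log₂( q / (1 + Σ_{i=1}^{r} 2^{i−1}·Z_i(W)) ). -/
/-!
Put `P(x,y) = W(y|x)/q` and `Q(x,y) = √(W(y|x) p(y))/q`, where `p` is the output distribution
under uniform input. Then `I(W) = 2 D(P ‖ Q)`, and Gibbs' inequality for the unnormalized `Q`
gives `I(W) ≥ -2 log₂ ∑ Q`. By Cauchy–Schwarz, `(∑ Q)² ≤ ∑_y (∑_x √W(y|x)/q)²`, so `I(W)` is at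
least the cutoff rate `R₀(W)`. Expanding the square gives `∑_y (∑_x √W(y|x))² = q ∑_v Z_v(W)`,
where `Z_0(W) = 1`; grouping the nonzero `v` by ordered weight turns `∑_{v ≠ 0} Z_v(W)` into
`∑_i 2^{i-1} Z_i(W)`.
-/

open Finset

instance (r : ℕ) : NeZero (2 ^ r) := ⟨pow_ne_zero r two_ne_zero⟩

/-- The Bhattacharyya parameter `Z(W; x, x') = ∑_y √(W x y · W x' y)` of a pair of inputs. -/
noncomputable def bhat {q : ℕ} {Y : Type*} [Fintype Y] (W : ZMod q → Y → ℝ) (x x' : ZMod q) : ℝ :=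
  ∑ y, Real.sqrt (W x y * W x' y)

/-- `Z_v(W) = (1/q) ∑_x Z(W; x, x+v)`. -/
noncomputable def Zv {q : ℕ} [NeZero q] {Y : Type*} [Fintype Y] (W : ZMod q → Y → ℝ) (v : ZMod q) : ℝ :=
  (1 / (q : ℝ)) * ∑ x, bhat W x (x + v)

/-- `W` is a discrete memoryless channel: nonnegative entries and rows summing to one. -/
def IsDMC {q : ℕ} {Y : Type*} [Fintype Y] (W : ZMod q → Y → ℝ) : Prop :=
  (∀ x y, 0 ≤ W x y) ∧ ∀ x, ∑ y, W x y = 1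

/-- The ordered weight `wt(v) = r - ν₂(v̄)` of `v : ZMod (2^r)`. -/
def owt (r : ℕ) {q : ℕ} (v : ZMod q) : ℕ := r - padicValNat 2 v.val

/-- The `i`-th average Bhattacharyya distance `Z_i(W) = 2^{-(i-1)} ∑_{v ∈ X_i} Z_v(W)`. -/
noncomputable def Zi (r : ℕ) {Y : Type*} [Fintype Y] (W : ZMod (2 ^ r) → Y → ℝ) (i : ℕ) : ℝ :=
  (1 / 2 ^ (i - 1) : ℝ) *
    ∑ v ∈ univ.filter (fun v : ZMod (2 ^ r) => v ≠ 0 ∧ owt r v = i), Zv W v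

/-- The symmetric capacity `I(W)` (with `0 log 0 = 0`). -/
noncomputable def symCap {q : ℕ} [NeZero q] {Y : Type*} [Fintype Y] (W : ZMod q → Y → ℝ) : ℝ :=
  ∑ x, ∑ y, (1 / (q : ℝ)) * W x y *
    Real.logb 2 (W x y / ∑ x', (1 / (q : ℝ)) * W x' y)

/-- `Z_max^{(j)}(W) = max_{v ∈ X_j} Z_v(W)` (as a supremum over the finite nonempty class `X_j`). -/
noncomputable def Zmax (r : ℕ) {Y : Type*} [Fintype Y] (W : ZMod (2 ^ r) → Y → ℝ) (j : ℕ) : ℝ :=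
  ⨆ v : {v : ZMod (2 ^ r) // v ≠ 0 ∧ owt r v = j}, Zv W v.1

/-- The Arıkan minus transform `W⁻ u₁ (y₁,y₂) = (1/q) ∑_{u₂} W (u₁+u₂) y₁ · W u₂ y₂`. -/
noncomputable def Wminus {q : ℕ} [NeZero q] {Y : Type*} [Fintype Y] (W : ZMod q → Y → ℝ) :
    ZMod q → Y × Y → ℝ :=
  fun u₁ p => (1 / (q : ℝ)) * ∑ u₂, W (u₁ + u₂) p.1 * W u₂ p.2

/-- The Arıkan plus transform `W⁺ u₂ (y₁,y₂,u₁) = (1/q) W (u₁+u₂) y₁ · W u₂ y₂`. -/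
noncomputable def Wplus {q : ℕ} [NeZero q] {Y : Type*} [Fintype Y] (W : ZMod q → Y → ℝ) :
    ZMod q → Y × Y × ZMod q → ℝ :=
  fun u₂ p => (1 / (q : ℝ)) * W (p.2.2 + u₂) p.1 * W u₂ p.2.1

/-- The restricted channel `W^{[r-k]}` for the `r-k` least significant bits. -/
noncomputable def Wres (r k : ℕ) {Y : Type*} [Fintype Y] (W : ZMod (2 ^ r) → Y → ℝ) :
    ZMod (2 ^ (r - k)) → Y → ℝ :=
  fun u y => (1 / 2 ^ k : ℝ) *
    ∑ x ∈ univ.filter (fun x : ZMod (2 ^ r) => x.val % 2 ^ (r - k) = u.val), W x y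

namespace Real

lemma sub_sub_mul_log_le_mul_log_div {p q c : ℝ} (hp : 0 ≤ p) (hq : 0 ≤ q) (hpq : p ≠ 0 → q ≠ 0) (hc : 0 < c) :
    p - q / c - p * log c ≤ p * log (p / q) := by
  rcases hp.eq_or_lt with rfl | hp
  · simp only [zero_sub, zero_mul, sub_zero, neg_nonpos]
    positivity
  have hq : 0 < q := hq.lt_of_ne (hpq hp.ne').symm
  have key := one_sub_inv_le_log_of_pos (by positivity : 0 < p * c / q)
  rw [log_div (by positivity) hq.ne', log_mul hp.ne' hc.ne', inv_div] at key
  rw [log_div hp.ne' hq.ne']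
  have := mul_le_mul_of_nonneg_left key hp.le
  rw [mul_sub, mul_one, mul_div_assoc', mul_div_mul_left _ _ hp.ne'] at this
  linarith

/-- Gibbs' inequality, with `q` not normalized. -/
theorem neg_log_le_sum_mul_log_div {ι : Type*} {s : Finset ι} {p q : ι → ℝ} {c : ℝ}
    (hp : ∀ i ∈ s, 0 ≤ p i) (hp₁ : ∑ i ∈ s, p i = 1) (hq : ∀ i ∈ s, 0 ≤ q i)
    (hpq : ∀ i ∈ s, p i ≠ 0 → q i ≠ 0) (hqc : ∑ i ∈ s, q i ≤ c) :
    -log c ≤ ∑ i ∈ s, p i * log (p i / q i) := by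
  obtain ⟨j, hj, hpj⟩ := exists_ne_zero_of_sum_ne_zero (hp₁.trans_ne one_ne_zero)
  have hc : 0 < c :=
    ((hq j hj).lt_of_ne (hpq j hj hpj).symm).trans_le ((single_le_sum hq hj).trans hqc)
  calc -log c ≤ ∑ i ∈ s, p i - (∑ i ∈ s, q i) / c - (∑ i ∈ s, p i) * log c := by
        have := div_le_one_of_le₀ hqc hc.le
        rw [hp₁, one_mul]
        linarith
    _ = ∑ i ∈ s, (p i - q i / c - p i * log c) := by
        rw [sum_sub_distrib, sum_sub_distrib, sum_div, sum_mul]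
    _ ≤ ∑ i ∈ s, p i * log (p i / q i) :=
        sum_le_sum fun i hi => sub_sub_mul_log_le_mul_log_div (hp i hi) (hq i hi) (hpq i hi) hc

end Real

section Channel

variable {q : ℕ} [NeZero q] {Y : Type*} [Fintype Y] {W : ZMod q → Y → ℝ}

noncomputable def outProb (W : ZMod q → Y → ℝ) (y : Y) : ℝ :=
  ∑ x, (1 / (q : ℝ)) * W x y

noncomputable def symCutoffRate (W : ZMod q → Y → ℝ) : ℝ :=
  -Real.logb 2 (∑ y, ((1 / (q : ℝ)) * ∑ x, √(W x y)) ^ 2)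

lemma one_div_natCast_pos : 0 < 1 / (q : ℝ) := by
  simp [NeZero.pos]

lemma IsDMC.sum_sum_one_div_mul (hW : IsDMC W) : ∑ x, ∑ y, (1 / (q : ℝ)) * W x y = 1 := by
  simp_rw [← mul_sum]
  simp [hW.2]

lemma IsDMC.sum_outProb (hW : IsDMC W) : ∑ y, outProb W y = 1 := by
  rw [← hW.sum_sum_one_div_mul, sum_comm]
  rfl

lemma IsDMC.outProb_nonneg (hW : IsDMC W) (y : Y) : 0 ≤ outProb W y :=
  sum_nonneg fun x _ => mul_nonneg one_div_natCast_pos.le (hW.1 x y)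

lemma IsDMC.outProb_pos (hW : IsDMC W) {x : ZMod q} {y : Y} (hxy : 0 < W x y) :
    0 < outProb W y :=
  sum_pos' (fun x' _ => mul_nonneg one_div_natCast_pos.le (hW.1 x' y))
    ⟨x, mem_univ x, mul_pos one_div_natCast_pos hxy⟩

/-- The capacity summand as a relative-entropy summand for `P = c w` and `Q = c √w √p`. -/
lemma mul_logb_div_eq {w p c : ℝ} (hw : 0 ≤ w) (hp : 0 ≤ p) (hc : c ≠ 0) :
    c * w * Real.logb 2 (w / p) =
      2 / Real.log 2 * (c * w * Real.log (c * w / (c * (√w * √p)))) := by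
  rcases eq_or_ne w 0 with rfl | hw₀
  · simp
  have hratio : c * w / (c * (√w * √p)) = √(w / p) := by
    rw [mul_div_mul_left _ _ hc, ← div_div, Real.div_sqrt, Real.sqrt_div hw]
  rw [hratio, Real.log_sqrt (div_nonneg hw hp), Real.logb]
  field_simp

lemma IsDMC.symCutoffRate_le_symCap (hW : IsDMC W) : symCutoffRate W ≤ symCap W := by
  set c : ℝ := 1 / q
  set P : ZMod q × Y → ℝ := fun i => c * W i.1 i.2
  set Q : ZMod q × Y → ℝ := fun i => c * (√(W i.1 i.2) * √(outProb W i.2))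
  set A : ℝ := ∑ y, (c * ∑ x, √(W x y)) ^ 2
  have hc : 0 < c := one_div_natCast_pos
  have hsymCap : symCap W = 2 / Real.log 2 * ∑ i, P i * Real.log (P i / Q i) := by
    rw [mul_sum, Fintype.sum_prod_type]
    exact sum_congr rfl fun x _ => sum_congr rfl fun y _ =>
      mul_logb_div_eq (hW.1 x y) (hW.outProb_nonneg y) hc.ne'
  have hQ : ∑ i, Q i ≤ √A := by
    calc ∑ i, Q i = ∑ y, √(outProb W y) * (c * ∑ x, √(W x y)) := by
          rw [Fintype.sum_prod_type, sum_comm]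
          simp_rw [mul_sum]
          exact sum_congr rfl fun y _ => sum_congr rfl fun x _ => by ring
      _ ≤ √(∑ y, √(outProb W y) ^ 2) * √A := Real.sum_mul_le_sqrt_mul_sqrt _ _ _
      _ = √A := by simp_rw [Real.sq_sqrt (hW.outProb_nonneg _), hW.sum_outProb, Real.sqrt_one,
          one_mul]
  have hgibbs : -Real.log √A ≤ ∑ i, P i * Real.log (P i / Q i) := by
    refine Real.neg_log_le_sum_mul_log_div (fun i _ => mul_nonneg hc.le (hW.1 _ _)) ?_
      (fun i _ => by positivity) (fun i _ hPi => ?_) hQ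
    · rw [Fintype.sum_prod_type]
      exact hW.sum_sum_one_div_mul
    · have hWi : 0 < W i.1 i.2 := (hW.1 _ _).lt_of_ne (right_ne_zero_of_mul hPi).symm
      exact (mul_pos hc (mul_pos (Real.sqrt_pos.2 hWi)
        (Real.sqrt_pos.2 (hW.outProb_pos hWi)))).ne'
  calc symCutoffRate W = 2 / Real.log 2 * -Real.log √A := by
        rw [symCutoffRate, Real.logb, Real.log_sqrt (sum_nonneg fun y _ => sq_nonneg _)]
        ring
    _ ≤ symCap W := by
        rw [hsymCap]
        exact mul_le_mul_of_nonneg_left hgibbs (by positivity)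

lemma natCast_mul_Zv (v : ZMod q) : (q : ℝ) * Zv W v = ∑ x, bhat W x (x + v) := by
  rw [Zv, ← mul_assoc, mul_one_div_cancel (NeZero.ne _), one_mul]

lemma IsDMC.Zv_zero (hW : IsDMC W) : Zv W 0 = 1 := by
  have hbhat : ∀ x, bhat W x x = 1 := fun x => by
    rw [bhat, ← hW.2 x]
    exact sum_congr rfl fun y _ => Real.sqrt_mul_self (hW.1 x y)
  simp_rw [Zv, add_zero, hbhat]
  simp

lemma sum_sq_sum_sqrt_eq (hW : ∀ x y, 0 ≤ W x y) :
    ∑ y, (∑ x, √(W x y)) ^ 2 = q * ∑ v, Zv W v := by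
  calc ∑ y, (∑ x, √(W x y)) ^ 2 = ∑ y, ∑ x, ∑ x', √(W x y * W x' y) := by
        simp_rw [sq, sum_mul_sum, Real.sqrt_mul (hW _ _)]
    _ = ∑ x, ∑ x', bhat W x x' := by
        rw [sum_comm]
        exact sum_congr rfl fun x _ => sum_comm
    _ = ∑ x, ∑ v, bhat W x (x + v) :=
        sum_congr rfl fun x _ => (Equiv.sum_comp (Equiv.addLeft x) _).symm
    _ = q * ∑ v, Zv W v := by
        rw [sum_comm, mul_sum]
        exact sum_congr rfl fun v _ => (natCast_mul_Zv v).symm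

lemma IsDMC.symCutoffRate_eq (hW : IsDMC W) :
    symCutoffRate W = Real.logb 2 (q / (1 + ∑ v ∈ univ.filter (· ≠ 0), Zv W v)) := by
  have hsplit : ∑ v, Zv W v = 1 + ∑ v ∈ univ.filter (· ≠ 0), Zv W v := by
    rw [← hW.Zv_zero, filter_ne', add_sum_erase _ _ (mem_univ 0)]
  have hsum : ∑ y, ((1 / (q : ℝ)) * ∑ x, √(W x y)) ^ 2 =
      (1 + ∑ v ∈ univ.filter (· ≠ 0), Zv W v) / q := by
    simp_rw [mul_pow, ← mul_sum, sum_sq_sum_sqrt_eq hW.1, hsplit]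
    field_simp
  rw [symCutoffRate, hsum, ← Real.logb_inv, inv_div]

end Channel

lemma owt_mem_Icc {r : ℕ} {v : ZMod (2 ^ r)} (hv : v ≠ 0) : owt r v ∈ Icc 1 r := by
  have hval : v.val ≠ 0 := (ZMod.val_ne_zero v).2 hv
  have hν : padicValNat 2 v.val < r := by
    rw [← Nat.pow_lt_pow_iff_right one_lt_two]
    exact (Nat.le_of_dvd (Nat.pos_of_ne_zero hval) pow_padicValNat_dvd).trans_lt (ZMod.val_lt v)
  rw [mem_Icc, owt]
  omega

lemma sum_Icc_two_pow_mul_Zi (r : ℕ) {Y : Type*} [Fintype Y] (W : ZMod (2 ^ r) → Y → ℝ) :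
    ∑ i ∈ Icc 1 r, (2 : ℝ) ^ (i - 1) * Zi r W i = ∑ v ∈ univ.filter (· ≠ 0), Zv W v := by
  have hZi : ∀ i, (2 : ℝ) ^ (i - 1) * Zi r W i =
      ∑ v ∈ (univ.filter (· ≠ 0)).filter (fun v => owt r v = i), Zv W v := fun i => by
    rw [Zi, ← mul_assoc, mul_one_div_cancel (by positivity), one_mul, filter_filter]
  simp_rw [hZi]
  exact sum_fiberwise_of_maps_to (fun v hv => owt_mem_Icc (mem_filter.1 hv).2) _

theorem capacity_lower_bound_general (r : ℕ) {Y : Type*} [Fintype Y]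
    (W : ZMod (2 ^ r) → Y → ℝ) (hW : IsDMC W) :
    Real.logb 2 ((2 ^ r : ℝ) / (1 + ∑ i ∈ Finset.Icc 1 r, (2 : ℝ) ^ (i - 1) * Zi r W i)) ≤
      symCap W := by
  have hcutoff := hW.symCutoffRate_le_symCap
  rwa [hW.symCutoffRate_eq, ← sum_Icc_two_pow_mul_Zi, Nat.cast_pow, Nat.cast_ofNat] at hcutoff

/-- `I(W) ≥ log₂( q / (1 + ∑_{i=1}^r 2^{i-1} Z_i(W)) )`. -/
theorem capacity_lower_bound (r : ℕ) (hr : 1 ≤ r) {Y : Type*} [Fintype Y] [Nonempty Y]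
    (W : ZMod (2 ^ r) → Y → ℝ) (hW : IsDMC W) :
    Real.logb 2 ((2 ^ r : ℝ) / (1 + ∑ i ∈ Finset.Icc 1 r, (2 : ℝ) ^ (i - 1) * Zi r W i)) ≤
      symCap W :=
  capacity_lower_bound_general r W hW
end

section
/- For every q-ary DMC W (q = 2^r) and every j with 0 ≤ j ≤ r−1, the maximal Bhattacharyya parameter over the ordered-weight class r−j squares under the plus-transform: Z_max^{(r−j)}(W⁺) = ( Z_max^{(r−j)}(W) )². -/
open Finset

lemma bhat_nonneg {q : ℕ} {Y : Type*} [Fintype Y] (W : ZMod q → Y → ℝ) (x x' : ZMod q) :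
    0 ≤ bhat W x x' :=
  Finset.sum_nonneg fun _ _ => Real.sqrt_nonneg _

lemma Zv_nonneg {q : ℕ} [NeZero q] {Y : Type*} [Fintype Y] (W : ZMod q → Y → ℝ) (v : ZMod q) :
    0 ≤ Zv W v :=
  mul_nonneg (by positivity) (Finset.sum_nonneg fun _ _ => bhat_nonneg W _ _)

lemma bhat_plus {q : ℕ} [NeZero q] {Y : Type*} [Fintype Y] (W : ZMod q → Y → ℝ)
    (hW : ∀ x y, 0 ≤ W x y) (x x' : ZMod q) :
    bhat (Wplus W) x x' = (1 / (q : ℝ)) * (∑ u₁ : ZMod q, bhat W (u₁ + x) (u₁ + x')) * bhat W x x' := by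
  have key : ∀ a b c d : ℝ, 0 ≤ a → 0 ≤ b → 0 ≤ c → 0 ≤ d →
      Real.sqrt ((1 / (q:ℝ) * a * c) * (1 / (q:ℝ) * b * d)) =
        (1 / (q:ℝ)) * (Real.sqrt (a * b) * Real.sqrt (c * d)) := by
    intro a b c d ha hb hc hd
    rw [show (1 / (q:ℝ) * a * c) * (1 / (q:ℝ) * b * d) =
        (1 / (q:ℝ))^2 * ((a * b) * (c * d)) by ring,
      Real.sqrt_mul (by positivity), Real.sqrt_sq (by positivity),
      Real.sqrt_mul (by positivity)]
  unfold bhat Wplus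
  rw [Fintype.sum_prod_type]
  simp only []
  calc ∑ y₁, ∑ p : Y × ZMod q,
        Real.sqrt ((1 / (q:ℝ) * W (p.2 + x) y₁ * W x p.1) * (1 / (q:ℝ) * W (p.2 + x') y₁ * W x' p.1))
      = ∑ y₁, ∑ p : Y × ZMod q,
        (1 / (q:ℝ)) * (Real.sqrt (W (p.2 + x) y₁ * W (p.2 + x') y₁) * Real.sqrt (W x p.1 * W x' p.1)) := by
        refine Finset.sum_congr rfl fun y₁ _ => Finset.sum_congr rfl fun p _ => ?_
        exact key _ _ _ _ (hW _ _) (hW _ _) (hW _ _) (hW _ _)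
    _ = (1 / (q:ℝ)) * (∑ u₁ : ZMod q, ∑ y₁, Real.sqrt (W (u₁ + x) y₁ * W (u₁ + x') y₁)) *
          ∑ y₂, Real.sqrt (W x y₂ * W x' y₂) := by
        simp only [Fintype.sum_prod_type]
        have hc := Finset.sum_comm (s := (univ : Finset Y)) (t := (univ : Finset Y))
          (f := fun y₁ y₂ => ∑ u₁ : ZMod q, (1 / (q:ℝ)) *
            (Real.sqrt (W (u₁ + x) y₁ * W (u₁ + x') y₁) * Real.sqrt (W x y₂ * W x' y₂)))
        rw [hc]
        conv_rhs => rw [Finset.mul_sum]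
        refine Finset.sum_congr rfl fun y₂ _ => ?_
        have hc2 := Finset.sum_comm (s := (univ : Finset Y)) (t := (univ : Finset (ZMod q)))
          (f := fun y₁ u₁ => (1 / (q:ℝ)) *
            (Real.sqrt (W (u₁ + x) y₁ * W (u₁ + x') y₁) * Real.sqrt (W x y₂ * W x' y₂)))
        rw [hc2]
        simp only [Finset.mul_sum, Finset.sum_mul]
        exact Finset.sum_congr rfl fun _ _ => Finset.sum_congr rfl fun _ _ => by ring
    _ = _ := rfl

lemma Zv_plus {q : ℕ} [NeZero q] {Y : Type*} [Fintype Y] (W : ZMod q → Y → ℝ)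
    (hW : ∀ x y, 0 ≤ W x y) (v : ZMod q) :
    Zv (Wplus W) v = (Zv W v) ^ 2 := by
  unfold Zv
  have h1 : ∀ x : ZMod q, bhat (Wplus W) x (x + v)
      = (1 / (q : ℝ)) * (∑ u₁ : ZMod q, bhat W (u₁ + x) (u₁ + x + v)) * bhat W x (x + v) := by
    intro x
    rw [bhat_plus W hW]
    congr 2
    exact Finset.sum_congr rfl fun u₁ _ => by rw [add_assoc]
  have h2 : ∀ x : ZMod q, (∑ u₁ : ZMod q, bhat W (u₁ + x) (u₁ + x + v))
      = ∑ z : ZMod q, bhat W z (z + v) := by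
    intro x
    exact Fintype.sum_equiv (Equiv.addRight x) _ _ fun u₁ => rfl
  simp only [h1, h2]
  rw [← Finset.mul_sum]
  ring

/-- `Z_max^{(r-j)}(W⁺) = (Z_max^{(r-j)}(W))²` for `0 ≤ j ≤ r-1`. -/
theorem Zmax_plus_square (r : ℕ) (hr : 1 ≤ r) {Y : Type*} [Fintype Y] [Nonempty Y]
    (W : ZMod (2 ^ r) → Y → ℝ) (hW : IsDMC W) (j : ℕ) (hj : j ≤ r - 1) :
    Zmax r (Wplus W) (r - j) = (Zmax r W (r - j)) ^ 2 := by
  have hjr : j < r := lt_of_le_of_lt hj (Nat.sub_lt (by omega) one_pos)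
  have hlt : 2 ^ j < 2 ^ r := Nat.pow_lt_pow_right one_lt_two hjr
  haveI : Fact (Nat.Prime 2) := ⟨Nat.prime_two⟩
  have hne : Nonempty {v : ZMod (2 ^ r) // v ≠ 0 ∧ owt r v = r - j} := by
    refine ⟨⟨((2 ^ j : ℕ) : ZMod (2 ^ r)), ?_, ?_⟩⟩
    · intro h
      have := (ZMod.natCast_eq_zero_iff _ _).mp h
      have := Nat.le_of_dvd (by positivity) this
      omega
    · have hval : (((2 ^ j : ℕ) : ZMod (2 ^ r))).val = 2 ^ j := by
        rw [ZMod.val_natCast, Nat.mod_eq_of_lt hlt]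
      unfold owt
      rw [hval, padicValNat.prime_pow]
  set S := {v : ZMod (2 ^ r) // v ≠ 0 ∧ owt r v = r - j}
  obtain ⟨a, ha⟩ := Finite.exists_max (fun v : S => Zv W v.1)
  have h1 : (⨆ v : S, Zv W v.1) = Zv W a.1 :=
    le_antisymm (ciSup_le ha)
      (le_ciSup (f := fun v : S => Zv W v.1) (Finite.bddAbove_range _) a)
  have h2 : (⨆ v : S, Zv (Wplus W) v.1) = Zv W a.1 ^ 2 := by
    have hk : ∀ v : S, Zv (Wplus W) v.1 = Zv W v.1 ^ 2 := fun v => Zv_plus W hW.1 v.1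
    refine le_antisymm (ciSup_le fun v => ?_) ?_
    · rw [hk v]
      exact pow_le_pow_left₀ (Zv_nonneg W v.1) (ha v) 2
    · rw [← hk a]
      exact le_ciSup (f := fun v : S => Zv (Wplus W) v.1) (Finite.bddAbove_range _) a
  unfold Zmax
  rw [h1, h2]
end

section
/- Under hypotheses (i), (ii), (iii), there exist measurable events Ω₀ and Ω₁ with P(Ω₀ ∪ Ω₁) = 1 such that U_n(ω) → 0 for every ω ∈ Ω₀ and U_n(ω) → 1 for every ω ∈ Ω₁; equivalently, for P-almost every ω the sequence U_n(ω) converges and its limit is 0 or 1. -/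
/-!
Write `A n` for the event that `U` squares at step `n`. For nonnegative `ℱ n`-measurable `G` we
have `∫_{A n} G ≥ ½ ∫ G`; hence if a bounded potential satisfies `Φ (n+1) ≤ F - 1_{A n} G` with
`G ≥ 0` known at time `n` and `F - G / 2 ≤ Φ n - D n`, the drifts `D n ≥ 0` have summable
expectations and tend to `0` almost surely.

Near `0`: `X = U ^ (1 / q)` squares on `A n` and otherwise grows at most by `s = q ^ (1 / q) < 2`.
With `a = 2 - s`, the capped process `min X a` has drift `min X a * (a - min X a) / 2`, and `X`
cannot jump from below a small `δ` to above `a - δ`; so `X → 0` or eventually `X ≥ a / 2`, i.e.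
`U → 0` or `U` eventually stays above `c = (a / 2) ^ q`.

Near `1`: while `U ≥ c`, the potential `1 - (1 - U) ^ β` with `(1 + c) ^ β ≥ 3` has drift at least
`(1 - U) ^ β / 2`, so `U → 1` almost surely on the event that `U` eventually stays above `c`.
-/

open MeasureTheory Filter

open scoped ENNReal Topology

lemma summable_of_add_le {a b : ℕ → ℝ} (ha : ∀ n, 0 ≤ a n) (hb : ∀ n, 0 ≤ b n)
    (hab : ∀ n, a (n + 1) + b n ≤ a n) : Summable b := by
  refine summable_of_sum_range_le hb (c := a 0) fun M => ?_
  have : ∑ i ∈ Finset.range M, b i ≤ a 0 - a M := by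
    induction M with
    | zero => simp
    | succ M ih => rw [Finset.sum_range_succ]; linarith [hab M]
  linarith [ha M]

lemma tendsto_zero_of_tendsto_pow {α : Type*} {l : Filter α} {x : α → ℝ} {β : ℕ} (hβ : β ≠ 0)
    (hx : ∀ i, 0 ≤ x i) (h : Tendsto (fun i => x i ^ β) l (𝓝 0)) : Tendsto x l (𝓝 0) := by
  have h' := h.rpow_const (p := (β : ℝ)⁻¹) (Or.inr (by positivity))
  rw [Real.zero_rpow (by positivity)] at h'
  exact h'.congr fun i => Real.pow_rpow_inv_natCast (hx i) hβ

lemma tendsto_zero_or_eventually_ge {x : ℕ → ℝ} {a s : ℝ} (ha : 0 < a) (hs : 0 ≤ s)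
    (hx0 : ∀ n, 0 ≤ x n) (hstep : ∀ n, x (n + 1) ≤ s * x n)
    (hlim : Tendsto (fun n => min (x n) a * (a - min (x n) a)) atTop (𝓝 0)) :
    Tendsto x atTop (𝓝 0) ∨ ∀ᶠ n in atTop, a / 2 ≤ x n := by
  refine or_iff_not_imp_right.2 fun hlow => ?_
  simp only [not_eventually, not_le] at hlow
  refine tendsto_order.2 ⟨fun b hb => Eventually.of_forall fun n => hb.trans_le (hx0 n),
    fun ε hε => ?_⟩
  set δ := min ε (a / (2 * (s + 1)))
  have hδ : 0 < δ := lt_min hε (by positivity)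
  have hδa : δ * (2 * (s + 1)) ≤ a := (le_div_iff₀ (by positivity)).1 (min_le_right _ _)
  have hδ2 : δ ≤ a / 2 := by nlinarith
  have hgap : ∀ᶠ n in atTop, x n < δ ∨ a - δ < x n := by
    filter_upwards [(tendsto_order.1 hlim).2 (δ * (a - δ)) (mul_pos hδ (by linarith))] with n hn
    by_contra! h
    rw [min_eq_left (by linarith [h.2])] at hn
    nlinarith [h.1, h.2]
  obtain ⟨N, hN⟩ := eventually_atTop.1 hgap
  obtain ⟨n, hnN, hn⟩ := frequently_atTop.1 hlow N
  have hsmall : ∀ k, n ≤ k → x k < δ := by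
    intro k hk
    induction k, hk using Nat.le_induction with
    | base => exact (hN n hnN).resolve_right (by linarith)
    | succ k hk ih =>
      refine (hN (k + 1) (by omega)).resolve_right fun h => ?_
      nlinarith [hstep k]
  exact eventually_atTop.2 ⟨n, fun k hk => (hsmall k hk).trans_le (min_le_left _ _)⟩

lemma min_sub_half_le (a x : ℝ) :
    min ((2 - a) * x) a - (min ((2 - a) * x) a - min (x ^ 2) a) / 2 ≤
      min x a - min x a * (a - min x a) / 2 := by
  rcases le_total a x with hax | hxa
  · rw [min_eq_right hax]
    linarith [min_le_right ((2 - a) * x) a, min_le_right (x ^ 2) a]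
  · rw [min_eq_left hxa]
    nlinarith [min_le_left ((2 - a) * x) a, min_le_left (x ^ 2) a]

lemma one_sub_pow_half_le {c u : ℝ} {β : ℕ} (hc : 0 ≤ c) (hcu : c ≤ u) (hu1 : u ≤ 1)
    (hβ : 3 ≤ (1 + c) ^ β) :
    1 - (1 - u ^ 2) ^ β / 2 ≤ 1 - (1 - u) ^ β - (1 - u) ^ β / 2 := by
  have h3 : 3 ≤ (1 + u) ^ β := hβ.trans (pow_le_pow_left₀ (by linarith) (by linarith) β)
  have hfac : (1 - u ^ 2) ^ β = (1 - u) ^ β * (1 + u) ^ β := by rw [← mul_pow]; ring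
  nlinarith [pow_nonneg (sub_nonneg.2 hu1) β]

lemma one_sub_pow_mem_Icc {u : ℝ} (hu : u ∈ Set.Icc (0 : ℝ) 1) (β : ℕ) :
    (1 - u) ^ β ∈ Set.Icc (0 : ℝ) 1 :=
  ⟨pow_nonneg (by linarith [hu.2]) β, pow_le_one₀ (by linarith [hu.2]) (by linarith [hu.1])⟩

section

variable {Ω : Type*} {m0 : MeasurableSpace Ω} {P : Measure Ω}

lemma ae_tendsto_zero_of_summable_integral {d : ℕ → Ω → ℝ} (hd : ∀ n, Integrable (d n) P)
    (hd0 : ∀ n ω, 0 ≤ d n ω) (hsum : Summable fun n => ∫ ω, d n ω ∂P) :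
    ∀ᵐ ω ∂P, Tendsto (fun n => d n ω) atTop (𝓝 0) := by
  have hmeas : ∀ n, AEMeasurable (fun ω => ENNReal.ofReal (d n ω)) P :=
    fun n => (hd n).aemeasurable.ennreal_ofReal
  have hfin : ∫⁻ ω, ∑' n, ENNReal.ofReal (d n ω) ∂P ≠ ∞ := by
    rw [lintegral_tsum hmeas]
    simp_rw [← ofReal_integral_eq_lintegral_ofReal (hd _) (ae_of_all _ (hd0 _))]
    rw [← ENNReal.ofReal_tsum_of_nonneg (fun n => integral_nonneg (hd0 n)) hsum]
    exact ENNReal.ofReal_ne_top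
  filter_upwards [ae_lt_top' (AEMeasurable.tsum hmeas) hfin] with ω hω
  have h := (ENNReal.tendsto_toReal ENNReal.zero_ne_top).comp
    (ENNReal.tendsto_atTop_zero_of_tsum_ne_top hω.ne)
  simpa [Function.comp_def, ENNReal.toReal_ofReal (hd0 _ ω)] using h

lemma half_integral_le_setIntegral {m : MeasurableSpace Ω} (hm : m ≤ m0) [IsFiniteMeasure P]
    {A : Set Ω} (hA : MeasurableSet[m0] A)
    (hA_half : ∀ᵐ ω ∂P, (1 : ℝ) / 2 ≤ P[A.indicator (fun _ => (1 : ℝ)) | m] ω)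
    {G : Ω → ℝ} (hG : StronglyMeasurable[m] G) (hGi : Integrable G P) (hG0 : ∀ ω, 0 ≤ G ω) :
    (∫ ω, G ω ∂P) / 2 ≤ ∫ ω in A, G ω ∂P := by
  have hAi : Integrable (A.indicator fun _ => (1 : ℝ)) P := (integrable_const 1).indicator hA
  have hGA : G * A.indicator (fun _ => (1 : ℝ)) = A.indicator G := by
    ext ω; by_cases h : ω ∈ A <;> simp [h]
  have hGAi : Integrable (G * A.indicator fun _ => (1 : ℝ)) P := hGA ▸ hGi.indicator hA
  have hpull := condExp_mul_of_stronglyMeasurable_left hG hGAi hAi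
  calc (∫ ω, G ω ∂P) / 2 = ∫ ω, G ω * (1 / 2) ∂P := by rw [integral_mul_const]; ring
    _ ≤ ∫ ω, (G * P[A.indicator (fun _ => (1 : ℝ)) | m]) ω ∂P := by
        refine integral_mono_ae (hGi.mul_const _) (integrable_condExp.congr hpull) ?_
        filter_upwards [hA_half] with ω hω
        exact mul_le_mul_of_nonneg_left hω (hG0 ω)
    _ = ∫ ω, (P[G * A.indicator (fun _ => (1 : ℝ)) | m]) ω ∂P := integral_congr_ae hpull.symm
    _ = ∫ ω in A, G ω ∂P := by rw [integral_condExp hm, hGA, integral_indicator hA]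

lemma integral_le_integral_sub_half {m : MeasurableSpace Ω} (hm : m ≤ m0) [IsFiniteMeasure P]
    {A : Set Ω} (hA : MeasurableSet[m0] A)
    (hA_half : ∀ᵐ ω ∂P, (1 : ℝ) / 2 ≤ P[A.indicator (fun _ => (1 : ℝ)) | m] ω)
    {f F G : Ω → ℝ} (hfi : Integrable f P) (hFi : Integrable F P) (hG : StronglyMeasurable[m] G)
    (hGi : Integrable G P) (hG0 : ∀ ω, 0 ≤ G ω) (hfFG : ∀ ω, f ω ≤ F ω - A.indicator G ω) :
    ∫ ω, f ω ∂P ≤ ∫ ω, F ω - G ω / 2 ∂P := by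
  have hhalf := half_integral_le_setIntegral hm hA hA_half hG hGi hG0
  rw [← integral_indicator hA] at hhalf
  calc ∫ ω, f ω ∂P ≤ ∫ ω, F ω - A.indicator G ω ∂P :=
        integral_mono hfi (hFi.sub (hGi.indicator hA)) hfFG
    _ ≤ ∫ ω, F ω - G ω / 2 ∂P := by
        rw [integral_sub hFi (hGi.indicator hA), integral_sub hFi (hGi.div_const 2),
          integral_div]
        linarith

section Squaring

variable [IsFiniteMeasure P] {ℱ : Filtration ℕ m0} {A : ℕ → Set Ω}

lemma integral_min_succ_le {X : ℕ → Ω → ℝ} (hX : Adapted ℱ X)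
    (hX01 : ∀ n ω, X n ω ∈ Set.Icc (0 : ℝ) 1) (hA : ∀ n, MeasurableSet (A n))
    (hA_half : ∀ n, ∀ᵐ ω ∂P, (1 : ℝ) / 2 ≤ P[(A n).indicator (fun _ => (1 : ℝ)) | ℱ n] ω)
    (hsqA : ∀ n, ∀ ω ∈ A n, X (n + 1) ω = X n ω ^ 2) {a : ℝ} (ha0 : 0 < a) (ha1 : a ≤ 1)
    (hstep : ∀ n ω, X (n + 1) ω ≤ (2 - a) * X n ω) (n : ℕ) :
    ∫ ω, min (X (n + 1) ω) a ∂P ≤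
      ∫ ω, min (X n ω) a - min (X n ω) a * (a - min (X n ω) a) / 2 ∂P := by
  have hXn := hX n
  have hXm := fun k => hX.measurable (i := k)
  set F := fun ω => min ((2 - a) * X n ω) a
  set G := fun ω => min ((2 - a) * X n ω) a - min (X n ω ^ 2) a
  have hG0 : ∀ ω, 0 ≤ G ω := fun ω => by
    obtain ⟨h0, h1⟩ := hX01 n ω
    have : X n ω ^ 2 ≤ (2 - a) * X n ω := by nlinarith
    simp only [G, sub_nonneg]; exact min_le_min_right a this
  have hpt : ∀ ω, min (X (n + 1) ω) a ≤ F ω - (A n).indicator G ω := fun ω => by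
    by_cases hω : ω ∈ A n
    · simp [F, G, hω, hsqA n ω hω]
    · simpa [F, hω] using min_le_min_right a (hstep n ω)
  have hGm : StronglyMeasurable[ℱ n] G := by fun_prop
  have hmin : ∀ t : ℝ, 0 ≤ t → 0 ≤ min t a ∧ min t a ≤ 1 :=
    fun t ht => ⟨le_min ht ha0.le, (min_le_right t a).trans ha1⟩
  have hx : ∀ k ω, 0 ≤ X k ω := fun k ω => (hX01 k ω).1
  have hF : ∀ ω, 0 ≤ F ω ∧ F ω ≤ 1 := fun ω => hmin _ (by nlinarith [hx n ω])
  have hFi : Integrable F P :=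
    .of_mem_Icc 0 1 (by fun_prop) (ae_of_all _ fun ω => hF ω)
  have hGi : Integrable G P :=
    .of_mem_Icc 0 1 (by fun_prop) (ae_of_all _ fun ω => ⟨hG0 ω, by
      linarith [(hF ω).2, (hmin (X n ω ^ 2) (by positivity)).1]⟩)
  have hYi : Integrable (fun ω => min (X (n + 1) ω) a) P :=
    .of_mem_Icc 0 1 (by fun_prop) (ae_of_all _ fun ω => hmin _ (hx _ ω))
  have hYdi : Integrable (fun ω => min (X n ω) a - min (X n ω) a * (a - min (X n ω) a) / 2) P := by
    refine .of_mem_Icc (-1) 1 (by fun_prop) (ae_of_all _ fun ω => ?_)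
    obtain ⟨h0, h1⟩ := hmin _ (hx n ω)
    constructor <;> nlinarith [min_le_right (X n ω) a]
  calc ∫ ω, min (X (n + 1) ω) a ∂P ≤ ∫ ω, F ω - G ω / 2 ∂P :=
        integral_le_integral_sub_half (ℱ.le n) (hA n) (hA_half n) hYi hFi hGm hGi hG0 hpt
    _ ≤ _ := integral_mono (hFi.sub (hGi.div_const 2)) hYdi fun ω => min_sub_half_le a (X n ω)

lemma ae_tendsto_zero_or_eventually_ge {X : ℕ → Ω → ℝ} (hX : Adapted ℱ X)
    (hX01 : ∀ n ω, X n ω ∈ Set.Icc (0 : ℝ) 1) (hA : ∀ n, MeasurableSet (A n))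
    (hA_half : ∀ n, ∀ᵐ ω ∂P, (1 : ℝ) / 2 ≤ P[(A n).indicator (fun _ => (1 : ℝ)) | ℱ n] ω)
    (hsqA : ∀ n, ∀ ω ∈ A n, X (n + 1) ω = X n ω ^ 2) {a : ℝ} (ha0 : 0 < a) (ha1 : a ≤ 1)
    (hstep : ∀ n ω, X (n + 1) ω ≤ (2 - a) * X n ω) :
    ∀ᵐ ω ∂P, Tendsto (fun n => X n ω) atTop (𝓝 0) ∨ ∀ᶠ n in atTop, a / 2 ≤ X n ω := by
  have hXm := fun n => hX.measurable (i := n)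
  have hY : ∀ n ω, 0 ≤ min (X n ω) a ∧ min (X n ω) a ≤ a :=
    fun n ω => ⟨le_min (hX01 n ω).1 ha0.le, min_le_right _ _⟩
  set d := fun n ω => min (X n ω) a * (a - min (X n ω) a) / 2
  have hd0 : ∀ n ω, 0 ≤ d n ω := fun n ω => by
    have := hY n ω; simp only [d]; nlinarith
  have hYi : ∀ n, Integrable (fun ω => min (X n ω) a) P := fun n =>
    .of_mem_Icc 0 a (by fun_prop) (ae_of_all _ (hY n))
  have hdi : ∀ n, Integrable (d n) P := fun n =>
    .of_mem_Icc 0 a (by fun_prop) (ae_of_all _ fun ω => ⟨hd0 n ω, by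
      have := hY n ω; simp only [d]; nlinarith⟩)
  have hsum : Summable fun n => ∫ ω, d n ω ∂P := by
    refine summable_of_add_le (a := fun n => ∫ ω, min (X n ω) a ∂P)
      (fun n => integral_nonneg fun ω => (hY n ω).1)
      (fun n => integral_nonneg (hd0 n)) fun n => ?_
    have := integral_min_succ_le hX hX01 hA hA_half hsqA ha0 ha1 hstep n
    rw [integral_sub (hYi n) (hdi n)] at this
    linarith
  filter_upwards [ae_tendsto_zero_of_summable_integral hdi hd0 hsum] with ω hω
  refine tendsto_zero_or_eventually_ge ha0 (by linarith) (fun n => (hX01 n ω).1)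
    (fun n => hstep n ω) ?_
  simpa [d, mul_div_cancel₀] using hω.const_mul 2

lemma integral_indicator_succ_add_le {U : ℕ → Ω → ℝ} (hU : Adapted ℱ U)
    (hU01 : ∀ n ω, U n ω ∈ Set.Icc (0 : ℝ) 1) (hA : ∀ n, MeasurableSet (A n))
    (hA_half : ∀ n, ∀ᵐ ω ∂P, (1 : ℝ) / 2 ≤ P[(A n).indicator (fun _ => (1 : ℝ)) | ℱ n] ω)
    (hsqA : ∀ n, ∀ ω ∈ A n, U (n + 1) ω = U n ω ^ 2) {c : ℝ} {β : ℕ} (hc : 0 ≤ c)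
    (hβ : 3 ≤ (1 + c) ^ β) {n : ℕ} {B B' : Set Ω} (hB : MeasurableSet[ℱ n] B)
    (hB' : MeasurableSet B') (hB'B : B' ⊆ B) (hBc : ∀ ω ∈ B, c ≤ U n ω) :
    ∫ ω, B'.indicator (fun ω => 1 - (1 - U (n + 1) ω) ^ β) ω ∂P +
        ∫ ω, B.indicator (fun ω => (1 - U n ω) ^ β / 2) ω ∂P ≤
      ∫ ω, B.indicator (fun ω => 1 - (1 - U n ω) ^ β) ω ∂P := by
  have hUn := hU n
  have hUm := fun k => hU.measurable (i := k)
  have hBm : MeasurableSet B := ℱ.le n _ hB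
  have hφ : ∀ k ω, 0 ≤ 1 - (1 - U k ω) ^ β ∧ 1 - (1 - U k ω) ^ β ≤ 1 := fun k ω => by
    have := one_sub_pow_mem_Icc (hU01 k ω) β
    constructor <;> linarith [this.1, this.2]
  have hψ : ∀ ω, (1 - U n ω ^ 2) ^ β ∈ Set.Icc (0 : ℝ) 1 := fun ω =>
    one_sub_pow_mem_Icc ⟨sq_nonneg _, pow_le_one₀ (hU01 n ω).1 (hU01 n ω).2⟩ β
  set F := B.indicator fun _ => (1 : ℝ)
  set G := B.indicator fun ω => (1 - U n ω ^ 2) ^ β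
  have hpt : ∀ ω, B'.indicator (fun ω => 1 - (1 - U (n + 1) ω) ^ β) ω ≤
      F ω - (A n).indicator G ω := fun ω => by
    by_cases hB'ω : ω ∈ B'
    · by_cases hAω : ω ∈ A n
      · simp [F, G, hB'ω, hB'B hB'ω, hAω, hsqA n ω hAω]
      · simp [F, G, hB'ω, hB'B hB'ω, hAω, (hφ (n + 1) ω).2]
    · by_cases hBω : ω ∈ B <;> by_cases hAω : ω ∈ A n <;>
        simp [F, G, hB'ω, hBω, hAω, (hψ ω).2]
  have hdrift : ∀ ω, F ω - G ω / 2 ≤ B.indicator (fun ω => 1 - (1 - U n ω) ^ β) ω -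
      B.indicator (fun ω => (1 - U n ω) ^ β / 2) ω := fun ω => by
    by_cases hBω : ω ∈ B
    · simp only [F, G, Set.indicator_of_mem hBω]
      linarith [one_sub_pow_half_le hc (hBc ω hBω) (hU01 n ω).2 hβ]
    · simp [F, G, hBω]
  have hφi : ∀ k, Integrable (fun ω => 1 - (1 - U k ω) ^ β) P := fun k =>
    .of_mem_Icc 0 1 (by fun_prop) (ae_of_all _ (hφ k))
  have hψi : Integrable (fun ω => (1 - U n ω ^ 2) ^ β) P :=
    .of_mem_Icc 0 1 (by fun_prop) (ae_of_all _ hψ)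
  have hdi : Integrable (fun ω => (1 - U n ω) ^ β / 2) P :=
    .of_mem_Icc 0 1 (by fun_prop) (ae_of_all _ fun ω => by
      have := hφ n ω; constructor <;> linarith)
  have hGm : StronglyMeasurable[ℱ n] G := StronglyMeasurable.indicator (by fun_prop) hB
  have hstep := integral_le_integral_sub_half (ℱ.le n) (hA n) (hA_half n)
    ((hφi (n + 1)).indicator hB') ((integrable_const 1).indicator hBm) hGm (hψi.indicator hBm)
    (fun ω => Set.indicator_nonneg (fun ω _ => (hψ ω).1) ω) hpt
  have hmono : ∫ ω, F ω - G ω / 2 ∂P ≤ ∫ ω, B.indicator (fun ω => 1 - (1 - U n ω) ^ β) ω -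
      B.indicator (fun ω => (1 - U n ω) ^ β / 2) ω ∂P :=
    integral_mono (((integrable_const 1).indicator hBm).sub
    ((hψi.indicator hBm).div_const 2)) (((hφi n).indicator hBm).sub (hdi.indicator hBm)) hdrift
  rw [integral_sub ((hφi n).indicator hBm) (hdi.indicator hBm)] at hmono
  linarith

lemma ae_tendsto_one_of_forall_ge {U : ℕ → Ω → ℝ} (hU : Adapted ℱ U)
    (hU01 : ∀ n ω, U n ω ∈ Set.Icc (0 : ℝ) 1) (hA : ∀ n, MeasurableSet (A n))
    (hA_half : ∀ n, ∀ᵐ ω ∂P, (1 : ℝ) / 2 ≤ P[(A n).indicator (fun _ => (1 : ℝ)) | ℱ n] ω)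
    (hsqA : ∀ n, ∀ ω ∈ A n, U (n + 1) ω = U n ω ^ 2) {c : ℝ} {β : ℕ} (hc : 0 ≤ c)
    (hβ : 3 ≤ (1 + c) ^ β) (N : ℕ) :
    ∀ᵐ ω ∂P, (∀ n ≥ N, c ≤ U n ω) → Tendsto (fun n => U n ω) atTop (𝓝 1) := by
  have hβ0 : β ≠ 0 := by rintro rfl; norm_num at hβ
  have hUm := fun k => hU.measurable (i := k)
  have hpow := fun k ω => one_sub_pow_mem_Icc (hU01 k ω) β
  set B : ℕ → Set Ω := fun n => {ω | ∀ k ≤ n, c ≤ U (N + k) ω}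
  have hB : ∀ n, MeasurableSet[ℱ (N + n)] (B n) := fun n => by
    simp only [B, Set.ofPred_forall]
    exact .iInter fun k => .iInter fun hk =>
      measurableSet_le measurable_const ((hU (N + k)).mono (ℱ.mono (by omega)) le_rfl)
  set d := fun n => (B n).indicator fun ω => (1 - U (N + n) ω) ^ β / 2
  have hd0 : ∀ n ω, 0 ≤ d n ω := fun n =>
    Set.indicator_nonneg fun ω _ => by linarith [(hpow (N + n) ω).1]
  have hdi : ∀ n, Integrable (d n) P := fun n =>
    (Integrable.of_mem_Icc 0 1 (by fun_prop) (ae_of_all _ fun ω => by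
      constructor <;> linarith [(hpow (N + n) ω).1, (hpow (N + n) ω).2])).indicator (ℱ.le _ _ (hB n))
  have hsum : Summable fun n => ∫ ω, d n ω ∂P :=
    summable_of_add_le
      (a := fun n => ∫ ω, (B n).indicator (fun ω => 1 - (1 - U (N + n) ω) ^ β) ω ∂P)
      (fun n => integral_nonneg <| Set.indicator_nonneg fun ω _ => by
        linarith [(hpow (N + n) ω).2])
      (fun n => integral_nonneg (hd0 n)) fun n =>
      integral_indicator_succ_add_le hU hU01 hA hA_half hsqA hc hβ (hB n)
        (ℱ.le _ _ (hB (n + 1))) (fun ω hω k hk => hω k (hk.trans n.le_succ))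
        fun ω hω => hω n le_rfl
  filter_upwards [ae_tendsto_zero_of_summable_integral hdi hd0 hsum] with ω hω hN
  have hmem : ∀ n, ω ∈ B n := fun n k _ => hN _ (Nat.le_add_right N k)
  have hlim : Tendsto (fun n => 1 - U (N + n) ω) atTop (𝓝 0) := by
    refine tendsto_zero_of_tendsto_pow hβ0 (fun n => sub_nonneg.2 (hU01 _ ω).2) ?_
    simpa [d, hmem, mul_div_cancel₀] using hω.const_mul 2
  have hlim' : Tendsto (fun n => U (N + n) ω) atTop (𝓝 1) := by
    simpa using (tendsto_const_nhds (x := (1 : ℝ))).sub hlim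
  exact (tendsto_add_atTop_iff_nat N).1 (by simpa only [add_comm] using hlim')

lemma ae_tendsto_one_of_eventually_ge {U : ℕ → Ω → ℝ} (hU : Adapted ℱ U)
    (hU01 : ∀ n ω, U n ω ∈ Set.Icc (0 : ℝ) 1) (hA : ∀ n, MeasurableSet (A n))
    (hA_half : ∀ n, ∀ᵐ ω ∂P, (1 : ℝ) / 2 ≤ P[(A n).indicator (fun _ => (1 : ℝ)) | ℱ n] ω)
    (hsqA : ∀ n, ∀ ω ∈ A n, U (n + 1) ω = U n ω ^ 2) {c : ℝ} (hc : 0 < c) :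
    ∀ᵐ ω ∂P, (∀ᶠ n in atTop, c ≤ U n ω) → Tendsto (fun n => U n ω) atTop (𝓝 1) := by
  obtain ⟨β, hβ⟩ := pow_unbounded_of_one_lt 3 (by linarith : (1 : ℝ) < 1 + c)
  filter_upwards [ae_all_iff.2
    (ae_tendsto_one_of_forall_ge hU hU01 hA hA_half hsqA hc.le hβ.le)] with ω hω hev
  obtain ⟨N, hN⟩ := eventually_atTop.1 hev
  exact hω N hN

lemma ae_tendsto_zero_or_eventually_ge_of_le_mul {U : ℕ → Ω → ℝ} (hU : Adapted ℱ U)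
    (hU01 : ∀ n ω, U n ω ∈ Set.Icc (0 : ℝ) 1) (hA : ∀ n, MeasurableSet (A n))
    (hA_half : ∀ n, ∀ᵐ ω ∂P, (1 : ℝ) / 2 ≤ P[(A n).indicator (fun _ => (1 : ℝ)) | ℱ n] ω)
    (hsqA : ∀ n, ∀ ω ∈ A n, U (n + 1) ω = U n ω ^ 2) {q : ℕ} (hq : 0 < q)
    (hbd : ∀ n ω, U (n + 1) ω ≤ q * U n ω) :
    ∃ c > 0, ∀ᵐ ω ∂P, Tendsto (fun n => U n ω) atTop (𝓝 0) ∨ ∀ᶠ n in atTop, c ≤ U n ω := by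
  set r : ℝ := (q : ℝ)⁻¹
  set s : ℝ := (q : ℝ) ^ r
  have hr : 0 ≤ r := by positivity
  have hs1 : 1 ≤ s := Real.one_le_rpow (by exact_mod_cast hq) hr
  have hs2 : s < 2 := by
    refine (Real.rpow_inv_lt_iff_of_pos (by positivity) zero_le_two (by positivity)).2 ?_
    rw [Real.rpow_natCast]
    exact_mod_cast Nat.lt_two_pow_self
  have hX : Adapted ℱ fun n ω => U n ω ^ r := fun n => (hU n).pow_const r
  have hX01 : ∀ n ω, U n ω ^ r ∈ Set.Icc (0 : ℝ) 1 := fun n ω =>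
    ⟨Real.rpow_nonneg (hU01 n ω).1 r, Real.rpow_le_one (hU01 n ω).1 (hU01 n ω).2 hr⟩
  have hsqX : ∀ n, ∀ ω ∈ A n, U (n + 1) ω ^ r = (U n ω ^ r) ^ 2 := fun n ω hω => by
    rw [hsqA n ω hω, Real.rpow_pow_comm (hU01 n ω).1]
  have hstepX : ∀ n ω, U (n + 1) ω ^ r ≤ (2 - (2 - s)) * U n ω ^ r := fun n ω => by
    rw [sub_sub_cancel, ← Real.mul_rpow (Nat.cast_nonneg q) (hU01 n ω).1]
    exact Real.rpow_le_rpow (hU01 _ ω).1 (hbd n ω) hr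
  refine ⟨((2 - s) / 2) ^ q, pow_pos (by linarith) q, ?_⟩
  filter_upwards [ae_tendsto_zero_or_eventually_ge hX hX01 hA hA_half hsqX (a := 2 - s)
    (by linarith) (by linarith) hstepX] with ω hω
  have hroot : ∀ n, (U n ω ^ r) ^ q = U n ω := fun n =>
    Real.rpow_inv_natCast_pow (hU01 n ω).1 hq.ne'
  refine hω.imp (fun h0 => ?_) fun hge => hge.mono fun n hn => ?_
  · simpa [hroot, zero_pow hq.ne'] using h0.pow q
  · exact (hroot n) ▸ pow_le_pow_left₀ (by linarith) hn q

end Squaring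

end

/-- a `[0,1]`-valued adapted process that squares with conditional probability at
least `1/2` and grows at most by a factor `q` converges to `0` or `1` almost surely: there are
events `Ω₀`, `Ω₁` of total probability one on which `Uₙ → 0`, resp. `Uₙ → 1`. -/
theorem polarization_process_converges {Ω : Type*} {m0 : MeasurableSpace Ω}
    (P : Measure Ω) [IsProbabilityMeasure P] (ℱ : Filtration ℕ m0)
    (U : ℕ → Ω → ℝ) (hadp : Adapted ℱ U)
    (h01 : ∀ n ω, U n ω ∈ Set.Icc (0 : ℝ) 1)
    (hsq : ∀ n, ∀ᵐ ω ∂P,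
      (1 : ℝ) / 2 ≤
        MeasureTheory.condExp (ℱ n) P
          (Set.indicator {ω' | U (n + 1) ω' = (U n ω') ^ 2} (fun _ => (1 : ℝ))) ω)
    (q : ℕ) (hq : 0 < q)
    (hbd : ∀ n ω, U (n + 1) ω ≤ (q : ℝ) * U n ω) :
    ∃ Ω0 Ω1 : Set Ω, MeasurableSet Ω0 ∧ MeasurableSet Ω1 ∧ P (Ω0 ∪ Ω1) = 1 ∧
      (∀ ω ∈ Ω0, Tendsto (fun n => U n ω) atTop (nhds 0)) ∧
      (∀ ω ∈ Ω1, Tendsto (fun n => U n ω) atTop (nhds 1)) := by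
  have hUm := fun n => hadp.measurable (i := n)
  have hA : ∀ n, MeasurableSet {ω | U (n + 1) ω = U n ω ^ 2} := fun n =>
    measurableSet_eq_fun (hUm (n + 1)) ((hUm n).pow_const 2)
  obtain ⟨c, hc, hlow⟩ :=
    ae_tendsto_zero_or_eventually_ge_of_le_mul hadp h01 hA hsq (fun _ _ h => h) hq hbd
  have hhigh := ae_tendsto_one_of_eventually_ge hadp h01 hA hsq (fun _ _ h => h) hc
  have hΩ0 := measurableSet_tendsto (l := atTop) (𝓝 (0 : ℝ)) hUm
  have hΩ1 := measurableSet_tendsto (l := atTop) (𝓝 (1 : ℝ)) hUm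
  refine ⟨_, _, hΩ0, hΩ1, ?_, fun _ h => h, fun _ h => h⟩
  rw [← measure_univ (μ := P), ← ae_mem_iff_measure_eq (hΩ0.union hΩ1).nullMeasurableSet]
  filter_upwards [hlow, hhigh] with ω hω hω'
  exact hω.imp id hω'
end

section
/- Under hypotheses (i), (ii), (iii), let β ∈ (0,1) be such that q^β − 1 < 1/4. If in addition U_0(ω) ≤ (1/4)^{1/β} for all ω, then P({ω : U_n(ω) → 0 as n → ∞}) ≥ 1/2. -/
/-!
Put `V = U ^ β`. A squaring step sends `V` to `V ^ 2` and every step multiplies `V` by at most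
`a = q ^ β < 3 / 2`. On the event `Gₙ` that `V` stayed below `1 / 2` up to time `n`, a squaring
step at least halves `V`, and it happens with conditional probability `≥ 1 / 2`, so
`xₙ = E[Vₙ; Gₙ]` contracts: `E[Vₙ₊₁; Gₙ] ≤ (a / 2 + 1 / 4) xₙ`. Leaving `G` at time `n + 1`
requires `Vₙ₊₁ > 1 / 2`, hence `P(Gₙ) - 2 xₙ` is nondecreasing and `P(Gₙ) ≥ 1 - 2 x₀ ≥ 1 / 2`.
Finally `∑ xₙ < ∞`, so `Vₙ → 0` almost surely on `⋂ Gₙ`.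
-/

open MeasureTheory Filter Set

theorem mul_integral_le_setIntegral_of_le_condExp {Ω : Type*} {m m0 : MeasurableSpace Ω}
    {μ : Measure Ω} [IsFiniteMeasure μ] (hm : m ≤ m0) {A : Set Ω} (hA : MeasurableSet A)
    {p C : ℝ} {X : Ω → ℝ} (hX : StronglyMeasurable[m] X) (hXC : ∀ᵐ ω ∂μ, ‖X ω‖ ≤ C)
    (hX0 : 0 ≤ᵐ[μ] X) (hp : ∀ᵐ ω ∂μ, p ≤ μ[A.indicator (fun _ => (1 : ℝ)) | m] ω) :
    p * ∫ ω, X ω ∂μ ≤ ∫ ω in A, X ω ∂μ := by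
  have h1A : Integrable (A.indicator fun _ => (1 : ℝ)) μ := (integrable_const 1).indicator hA
  have hXi : Integrable X μ := .of_bound (hX.mono hm).aestronglyMeasurable C hXC
  have hpull := condExp_stronglyMeasurable_mul_of_bound hm hX h1A C hXC
  calc p * ∫ ω, X ω ∂μ = ∫ ω, X ω * p ∂μ := by rw [integral_mul_const, mul_comm]
    _ ≤ ∫ ω, (X * μ[A.indicator (fun _ => (1 : ℝ)) | m]) ω ∂μ := by
      refine integral_mono_ae (hXi.mul_const p) (integrable_condExp.congr hpull) ?_
      filter_upwards [hp, hX0] with ω hpω hXω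
      exact mul_le_mul_of_nonneg_left hpω hXω
    _ = ∫ ω, (X * A.indicator (fun _ => (1 : ℝ))) ω ∂μ := by
      rw [← integral_congr_ae hpull, integral_condExp hm]
    _ = ∫ ω in A, X ω ∂μ := by
      rw [← integral_indicator hA]
      congr 1 with ω
      by_cases hω : ω ∈ A <;> simp [hω]

theorem ae_tendsto_zero_of_summable_integral_s9 {Ω : Type*} {m0 : MeasurableSpace Ω}
    {μ : Measure Ω} {f : ℕ → Ω → ℝ} (hf : ∀ n, Integrable (f n) μ) (hf0 : ∀ n, 0 ≤ᵐ[μ] f n)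
    (hs : Summable fun n => ∫ ω, f n ω ∂μ) :
    ∀ᵐ ω ∂μ, Tendsto (fun n => f n ω) atTop (nhds 0) := by
  have hmeas : ∀ n, AEMeasurable (fun ω => ENNReal.ofReal (f n ω)) μ :=
    fun n => (hf n).aemeasurable.ennreal_ofReal
  have hfin : ∫⁻ ω, ∑' n, ENNReal.ofReal (f n ω) ∂μ ≠ ⊤ := by
    rw [lintegral_tsum hmeas]
    simp_rw [← ofReal_integral_eq_lintegral_ofReal (hf _) (hf0 _)]
    rw [← ENNReal.ofReal_tsum_of_nonneg (fun n => integral_nonneg_of_ae (hf0 n)) hs]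
    exact ENNReal.ofReal_ne_top
  filter_upwards [ae_lt_top' (AEMeasurable.tsum hmeas) hfin, ae_all_iff.2 hf0]
    with ω hω hω0
  have := (ENNReal.tendsto_toReal ENNReal.zero_ne_top).comp
    (ENNReal.tendsto_atTop_zero_of_tsum_ne_top hω.ne)
  simpa [Function.comp_def, ENNReal.toReal_ofReal (hω0 _)] using this

section KeptLow

variable {Ω : Type*} {m0 : MeasurableSpace Ω} {P : Measure Ω} {ℱ : Filtration ℕ m0}
  {V : ℕ → Ω → ℝ}

def keptLow (V : ℕ → Ω → ℝ) (n : ℕ) : Set Ω := {ω | ∀ k ≤ n, V k ω ≤ 1 / 2}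

theorem measurableSet_keptLow (hV : Adapted ℱ V) (n : ℕ) :
    MeasurableSet[ℱ n] (keptLow V n) := by
  simp only [keptLow, ofPred_forall]
  exact .iInter fun k => .iInter fun hk =>
    (hV k).mono (ℱ.mono hk) le_rfl measurableSet_Iic

theorem keptLow_succ (n : ℕ) :
    keptLow V (n + 1) = keptLow V n ∩ {ω | V (n + 1) ω ≤ 1 / 2} := by
  ext ω
  simp [keptLow, Nat.le_succ_iff, or_imp, forall_and]

theorem keptLow_zero (hV0 : ∀ ω, V 0 ω ≤ 1 / 2) : keptLow V 0 = univ := by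
  ext ω
  simpa [keptLow] using hV0 ω

theorem integrable_of_adapted_mem_Icc [IsFiniteMeasure P] (hV : Adapted ℱ V)
    (hV01 : ∀ k ω, V k ω ∈ Icc (0 : ℝ) 1) (k : ℕ) : Integrable (V k) P :=
  .of_mem_Icc 0 1 ((hV k).mono (ℱ.le k) le_rfl).aemeasurable (ae_of_all _ (hV01 k))

theorem indicator_keptLow_sub_sq_mem_Icc (hV01 : ∀ k ω, V k ω ∈ Icc (0 : ℝ) 1) {a : ℝ}
    (ha : 1 / 2 ≤ a) (n : ℕ) (ω : Ω) :
    (keptLow V n).indicator (fun ω => a * V n ω - V n ω ^ 2) ω ∈ Icc 0 a := by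
  by_cases hω : ω ∈ keptLow V n
  · have hVω : V n ω ≤ 1 / 2 := hω n le_rfl
    obtain ⟨h0, h1⟩ := hV01 n ω
    simp only [indicator_of_mem hω, mem_Icc]
    constructor <;> nlinarith
  · simp only [indicator_of_notMem hω, mem_Icc, le_refl, true_and]
    linarith

theorem setIntegral_keptLow_succ_le [IsFiniteMeasure P] (hV : Adapted ℱ V)
    (hV01 : ∀ k ω, V k ω ∈ Icc (0 : ℝ) 1) {n : ℕ} {A : Set Ω} (hA : MeasurableSet A)
    (hsq : ∀ᵐ ω ∂P, (1 : ℝ) / 2 ≤ P[A.indicator (fun _ => (1 : ℝ)) | ℱ n] ω)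
    (hsqA : ∀ ω ∈ A, V (n + 1) ω = V n ω ^ 2) {a : ℝ} (hbd : ∀ ω, V (n + 1) ω ≤ a * V n ω)
    (ha : 1 / 2 ≤ a) :
    ∫ ω in keptLow V n, V (n + 1) ω ∂P ≤ (a / 2 + 1 / 4) * ∫ ω in keptLow V n, V n ω ∂P := by
  set G := keptLow V n
  set x := ∫ ω in G, V n ω ∂P
  -- `Y` is what a squaring step saves compared with the worst-case growth `V ↦ a V`
  set Y : Ω → ℝ := fun ω => a * V n ω - V n ω ^ 2
  have hGℱ := measurableSet_keptLow hV n
  have hG : MeasurableSet G := ℱ.le n _ hGℱ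
  have hVi := integrable_of_adapted_mem_Icc (P := P) hV hV01
  have hV2i : Integrable (fun ω => V n ω ^ 2) P :=
    .of_mem_Icc 0 1 ((hVi n).aemeasurable.pow_const 2) (ae_of_all _ fun ω =>
      ⟨sq_nonneg _, pow_le_one₀ (hV01 n ω).1 (hV01 n ω).2⟩)
  have hYi : Integrable Y P := ((hVi n).const_mul a).sub hV2i
  have hGY := indicator_keptLow_sub_sq_mem_Icc hV01 ha n
  have hsaving : (1 / 2) * ∫ ω, G.indicator Y ω ∂P ≤ ∫ ω in A, G.indicator Y ω ∂P :=
    mul_integral_le_setIntegral_of_le_condExp (ℱ.le n) hA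
      ((((hV n).const_mul a).sub ((hV n).pow_const 2)).indicator hGℱ).stronglyMeasurable
      (C := a) (ae_of_all _ fun ω => abs_le.2 ⟨by linarith [(hGY ω).1], (hGY ω).2⟩)
      (ae_of_all _ fun ω => (hGY ω).1) hsq
  have hsq_le : ∫ ω in G, V n ω ^ 2 ∂P ≤ ∫ ω in G, 1 / 2 * V n ω ∂P :=
    setIntegral_mono_on hV2i.integrableOn ((hVi n).const_mul _).integrableOn hG
      fun ω hω => by nlinarith [(hV01 n ω).1, hω n le_rfl]
  have hpointwise : ∀ ω, V (n + 1) ω ≤ a * V n ω - A.indicator Y ω := fun ω => by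
    by_cases hω : ω ∈ A
    · simp [indicator_of_mem hω, Y, hsqA ω hω]
    · simpa [indicator_of_notMem hω] using hbd ω
  calc ∫ ω in G, V (n + 1) ω ∂P
      ≤ ∫ ω in G, (a * V n ω - A.indicator Y ω) ∂P :=
        setIntegral_mono (hVi (n + 1)).integrableOn
          (((hVi n).const_mul a).sub (hYi.indicator hA)).integrableOn hpointwise
    _ = a * x - ∫ ω in A, G.indicator Y ω ∂P := by
      rw [integral_sub ((hVi n).const_mul a).integrableOn (hYi.indicator hA).integrableOn,
        integral_const_mul, setIntegral_indicator hA, setIntegral_indicator hG, inter_comm]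
    _ ≤ a * x - 1 / 2 * (a * x - ∫ ω in G, V n ω ^ 2 ∂P) := by
      rw [integral_indicator hG, integral_sub ((hVi n).const_mul a).integrableOn
        hV2i.integrableOn, integral_const_mul] at hsaving
      linarith
    _ ≤ (a / 2 + 1 / 4) * x := by
      rw [integral_const_mul] at hsq_le
      linarith

theorem measureReal_keptLow_sub_succ_le [IsFiniteMeasure P] (hV : Adapted ℱ V)
    (hV01 : ∀ k ω, V k ω ∈ Icc (0 : ℝ) 1) (n : ℕ) :
    P.real (keptLow V n) - P.real (keptLow V (n + 1)) ≤
      2 * (∫ ω in keptLow V n, V (n + 1) ω ∂P - ∫ ω in keptLow V (n + 1), V (n + 1) ω ∂P) := by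
  have hsub : keptLow V (n + 1) ⊆ keptLow V n := keptLow_succ n ▸ inter_subset_left
  have hG := ℱ.le n _ (measurableSet_keptLow hV n)
  have hG' := ℱ.le (n + 1) _ (measurableSet_keptLow hV (n + 1))
  have hVi :=
    (integrable_of_adapted_mem_Icc (P := P) hV hV01 (n + 1)).integrableOn (s := keptLow V n)
  have hescape : ∀ ω ∈ keptLow V n \ keptLow V (n + 1), 1 / 2 ≤ V (n + 1) ω := by
    rintro ω ⟨hω, hω'⟩
    rw [keptLow_succ] at hω'
    by_contra! h
    exact hω' ⟨hω, h.le⟩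
  have := setIntegral_ge_of_const_le (hG.diff hG') (measure_ne_top P _) hescape
    (hVi.mono_set sdiff_subset)
  rw [← measureReal_sdiff hsub hG', ← setIntegral_sdiff hG' hVi hsub]
  rw [smul_eq_mul] at this
  linarith

theorem half_le_measureReal_keptLow [IsProbabilityMeasure P] (hV : Adapted ℱ V)
    (hV01 : ∀ k ω, V k ω ∈ Icc (0 : ℝ) 1) (hV0 : ∀ ω, V 0 ω ≤ 1 / 4)
    (hdrift : ∀ n, ∫ ω in keptLow V n, V (n + 1) ω ∂P ≤ ∫ ω in keptLow V n, V n ω ∂P)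
    (n : ℕ) : 1 / 2 ≤ P.real (keptLow V n) := by
  have hG0 : keptLow V 0 = univ := keptLow_zero fun ω => (hV0 ω).trans (by norm_num)
  have hmono : Monotone fun n => P.real (keptLow V n) - 2 * ∫ ω in keptLow V n, V n ω ∂P :=
    monotone_nat_of_le_succ fun n => by
      linarith [measureReal_keptLow_sub_succ_le (P := P) hV hV01 n, hdrift n]
  have hx0 : ∫ ω, V 0 ω ∂P ≤ 1 / 4 := by
    simpa using
      integral_mono (integrable_of_adapted_mem_Icc (P := P) hV hV01 0) (integrable_const _) hV0
  have hxn : 0 ≤ ∫ ω in keptLow V n, V n ω ∂P :=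
    setIntegral_nonneg (ℱ.le n _ (measurableSet_keptLow hV n)) fun ω _ => (hV01 n ω).1
  have := hmono (Nat.zero_le n)
  dsimp only at this
  rw [hG0, setIntegral_univ, probReal_univ] at this
  linarith

theorem ae_tendsto_zero_of_forall_mem_keptLow [IsFiniteMeasure P] (hV : Adapted ℱ V)
    (hV01 : ∀ k ω, V k ω ∈ Icc (0 : ℝ) 1) {c : ℝ} (hc : c < 1)
    (hdrift : ∀ n, ∫ ω in keptLow V n, V (n + 1) ω ∂P ≤ c * ∫ ω in keptLow V n, V n ω ∂P) :
    ∀ᵐ ω ∂P, (∀ n, ω ∈ keptLow V n) → Tendsto (fun n => V n ω) atTop (nhds 0) := by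
  have hG n := ℱ.le n _ (measurableSet_keptLow hV n)
  have hVi := integrable_of_adapted_mem_Icc (P := P) hV hV01
  have hx n : ‖∫ ω, (keptLow V n).indicator (V n) ω ∂P‖ = ∫ ω in keptLow V n, V n ω ∂P := by
    rw [integral_indicator (hG n), Real.norm_of_nonneg
      (setIntegral_nonneg (hG n) fun ω _ => (hV01 n ω).1)]
  have hsum : Summable fun n => ∫ ω, (keptLow V n).indicator (V n) ω ∂P := by
    refine summable_of_ratio_norm_eventually_le hc (Eventually.of_forall fun n => ?_)
    rw [hx, hx]
    refine le_trans ?_ (hdrift n)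
    exact setIntegral_mono_set (hVi (n + 1)).integrableOn
      (ae_of_all _ fun ω => (hV01 (n + 1) ω).1)
      (keptLow_succ n ▸ inter_subset_left : keptLow V (n + 1) ⊆ keptLow V n).eventuallyLE
  filter_upwards [ae_tendsto_zero_of_summable_integral_s9 (fun n => (hVi n).indicator (hG n))
    (fun n => ae_of_all _ (indicator_nonneg fun ω _ => (hV01 n ω).1)) hsum] with ω hω hmem
  exact hω.congr fun n => indicator_of_mem (hmem n) _

theorem half_le_measure_tendsto_zero [IsProbabilityMeasure P] (hV : Adapted ℱ V)
    (hV01 : ∀ k ω, V k ω ∈ Icc (0 : ℝ) 1) {A : ℕ → Set Ω} (hA : ∀ n, MeasurableSet (A n))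
    (hsq : ∀ n, ∀ᵐ ω ∂P, (1 : ℝ) / 2 ≤ P[(A n).indicator (fun _ => (1 : ℝ)) | ℱ n] ω)
    (hsqA : ∀ n, ∀ ω ∈ A n, V (n + 1) ω = V n ω ^ 2) {a : ℝ}
    (hbd : ∀ n ω, V (n + 1) ω ≤ a * V n ω) (ha : a < 3 / 2) (hV0 : ∀ ω, V 0 ω ≤ 1 / 4) :
    1 / 2 ≤ P {ω | Tendsto (fun n => V n ω) atTop (nhds 0)} := by
  wlog ha' : 1 / 2 ≤ a generalizing a
  · refine this (a := 1 / 2) (fun n ω => (hbd n ω).trans ?_) (by norm_num) le_rfl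
    exact mul_le_mul_of_nonneg_right (by linarith) (hV01 n ω).1
  have hdrift n := setIntegral_keptLow_succ_le hV hV01 (hA n) (hsq n) (hsqA n) (hbd n) ha'
  have hc : a / 2 + 1 / 4 < 1 := by linarith
  have hhalf n : (1 / 2 : ENNReal) ≤ P (keptLow V n) := by
    have := half_le_measureReal_keptLow hV hV01 hV0 (fun n => (hdrift n).trans
      (mul_le_of_le_one_left (setIntegral_nonneg (ℱ.le n _ (measurableSet_keptLow hV n))
        fun ω _ => (hV01 n ω).1) hc.le)) n
    rw [← ofReal_measureReal]
    exact le_of_eq_of_le (by norm_num [ENNReal.ofReal_div_of_pos])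
      (ENNReal.ofReal_le_ofReal this)
  have hanti : Antitone (keptLow V) :=
    antitone_nat_of_succ_le fun n => keptLow_succ n ▸ inter_subset_left
  calc 1 / 2 ≤ P (⋂ n, keptLow V n) := by
        rw [hanti.measure_iInter
          (fun n => (ℱ.le n _ (measurableSet_keptLow hV n)).nullMeasurableSet)
          ⟨0, measure_ne_top P _⟩]
        exact le_iInf hhalf
    _ ≤ P {ω | Tendsto (fun n => V n ω) atTop (nhds 0)} :=
        measure_mono_ae <| (ae_tendsto_zero_of_forall_mem_keptLow hV hV01 hc hdrift).mono
          fun ω h hmem => h (mem_iInter.1 hmem)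

end KeptLow

theorem small_start_converges_to_zero_general {Ω : Type*} {m0 : MeasurableSpace Ω}
    (P : Measure Ω) [IsProbabilityMeasure P] (ℱ : Filtration ℕ m0)
    (U : ℕ → Ω → ℝ) (hadp : Adapted ℱ U)
    (h01 : ∀ n ω, U n ω ∈ Set.Icc (0 : ℝ) 1)
    (hsq : ∀ n, ∀ᵐ ω ∂P,
      (1 : ℝ) / 2 ≤
        MeasureTheory.condExp (ℱ n) P
          (Set.indicator {ω' | U (n + 1) ω' = (U n ω') ^ 2} (fun _ => (1 : ℝ))) ω)
    (q : ℕ)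
    (hbd : ∀ n ω, U (n + 1) ω ≤ (q : ℝ) * U n ω)
    (β : ℝ) (hβ : β ∈ Set.Ioo (0 : ℝ) 1) (hqβ : (q : ℝ) ^ β - 1 < 1 / 4)
    (hU0 : ∀ ω, U 0 ω ≤ (1 / 4 : ℝ) ^ (1 / β)) :
    (1 / 2 : ENNReal) ≤ P {ω | Tendsto (fun n => U n ω) atTop (nhds 0)} := by
  have hβ0 : 0 < β := hβ.1
  have hU n : Measurable (U n) := (hadp n).mono (ℱ.le n) le_rfl
  have key := half_le_measure_tendsto_zero (P := P) (V := fun n ω => U n ω ^ β)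
    (fun n => (hadp n).pow_const β)
    (fun n ω => ⟨Real.rpow_nonneg (h01 n ω).1 β,
      Real.rpow_le_one (h01 n ω).1 (h01 n ω).2 hβ0.le⟩)
    (fun n => measurableSet_eq_fun (hU (n + 1)) ((hU n).pow_const 2)) hsq
    (fun n ω (hω : U (n + 1) ω = U n ω ^ 2) => by
      rw [hω, Real.rpow_pow_comm (h01 n ω).1])
    (fun n ω => by
      rw [← Real.mul_rpow (Nat.cast_nonneg q) (h01 n ω).1]
      exact Real.rpow_le_rpow (h01 (n + 1) ω).1 (hbd n ω) hβ0.le)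
    (a := (q : ℝ) ^ β) (by linarith)
    (fun ω => by
      have := Real.rpow_le_rpow (h01 0 ω).1 (hU0 ω) hβ0.le
      rwa [one_div β, Real.rpow_inv_rpow (by norm_num) hβ0.ne'] at this)
  refine key.trans (measure_mono fun ω (hω : Tendsto _ _ _) => ?_)
  have := hω.rpow_const (p := β⁻¹) (Or.inr (inv_nonneg.2 hβ0.le))
  rw [Real.zero_rpow (inv_ne_zero hβ0.ne')] at this
  exact this.congr fun n => Real.rpow_rpow_inv (h01 n ω).1 hβ0.ne'

/-- if moreover `β ∈ (0,1)` satisfies `q^β - 1 < 1/4` and `U₀ ≤ (1/4)^{1/β}`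
everywhere, then `Uₙ → 0` with probability at least `1/2`. -/
theorem small_start_converges_to_zero {Ω : Type*} {m0 : MeasurableSpace Ω}
    (P : Measure Ω) [IsProbabilityMeasure P] (ℱ : Filtration ℕ m0)
    (U : ℕ → Ω → ℝ) (hadp : Adapted ℱ U)
    (h01 : ∀ n ω, U n ω ∈ Set.Icc (0 : ℝ) 1)
    (hsq : ∀ n, ∀ᵐ ω ∂P,
      (1 : ℝ) / 2 ≤
        MeasureTheory.condExp (ℱ n) P
          (Set.indicator {ω' | U (n + 1) ω' = (U n ω') ^ 2} (fun _ => (1 : ℝ))) ω)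
    (q : ℕ) (hq : 0 < q)
    (hbd : ∀ n ω, U (n + 1) ω ≤ (q : ℝ) * U n ω)
    (β : ℝ) (hβ : β ∈ Set.Ioo (0 : ℝ) 1) (hqβ : (q : ℝ) ^ β - 1 < 1 / 4)
    (hU0 : ∀ ω, U 0 ω ≤ (1 / 4 : ℝ) ^ (1 / β)) :
    (1 / 2 : ENNReal) ≤ P {ω | Tendsto (fun n => U n ω) atTop (nhds 0)} :=
  small_start_converges_to_zero_general P ℱ U hadp h01 hsq q hbd β hβ hqβ hU0
end

section
/- Let W be a q-ary DMC (q = 2^r) and let v, v' ∈ ZMod q be nonzero with wt(v) ≥ wt(v'). For any δ' > 0: if Z_v(W) ≥ 1 − δ'·q^{−3}, then Z_{v'}(W) ≥ 1 − δ'. -/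
/-!
The map `x ↦ (√(W x y))_y` sends the inputs to unit vectors of `ℓ²(Y)` whose squared distances are
`2 (1 - Z(W; x, x'))`. If `Z_v(W) ≥ 1 - δ' / q³`, every step `x ↦ x + v` has `1 - Z ≤ δ' / q²`,
i.e. length at most `√(2 δ') / q`. A smaller ordered weight means `v ∣ v'` in `ZMod q`, so
`x ↦ x + v'` is a chain of fewer than `q` such steps, of length at most `√(2 δ')` by the triangle
inequality.
-/

open Finset

section Bhattacharyya

variable {q : ℕ} {Y : Type*} [Fintype Y]

noncomputable def sqrtEmbedding (W : ZMod q → Y → ℝ) (x : ZMod q) : EuclideanSpace ℝ Y :=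
  WithLp.toLp 2 fun y => √(W x y)

theorem dist_sqrtEmbedding_sq {W : ZMod q → Y → ℝ} (hW : IsDMC W) (x x' : ZMod q) :
    dist (sqrtEmbedding W x) (sqrtEmbedding W x') ^ 2 = 2 * (1 - bhat W x x') := by
  have hsq : ∀ y, dist (√(W x y)) (√(W x' y)) ^ 2 = W x y + W x' y - 2 * √(W x y * W x' y) := by
    intro y
    rw [Real.dist_eq, sq_abs, sub_sq, Real.sq_sqrt (hW.1 x y), Real.sq_sqrt (hW.1 x' y),
      Real.sqrt_mul (hW.1 x y)]
    ring
  simp only [EuclideanSpace.dist_sq_eq, sqrtEmbedding, hsq, sum_sub_distrib,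
    sum_add_distrib, hW.2, ← mul_sum, bhat]
  ring

theorem bhat_le_one {W : ZMod q → Y → ℝ} (hW : IsDMC W) (x x' : ZMod q) : bhat W x x' ≤ 1 := by
  linarith [dist_sqrtEmbedding_sq hW x x',
    sq_nonneg (dist (sqrtEmbedding W x) (sqrtEmbedding W x'))]

variable [NeZero q]

theorem one_sub_bhat_le_mul_one_sub_Zv {W : ZMod q → Y → ℝ} (hW : IsDMC W) (v x : ZMod q) :
    1 - bhat W x (x + v) ≤ q * (1 - Zv W v) := by
  have hq : (q : ℝ) ≠ 0 := NeZero.ne _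
  have hsum : (q : ℝ) * (1 - Zv W v) = ∑ x, (1 - bhat W x (x + v)) := by
    rw [Zv, sum_sub_distrib, sum_const, card_univ, ZMod.card, nsmul_one]
    field_simp
  rw [hsum]
  exact single_le_sum (f := fun x => 1 - bhat W x (x + v))
    (fun x _ => sub_nonneg.2 (bhat_le_one hW _ _)) (mem_univ x)

theorem le_Zv_of_forall_le_bhat {W : ZMod q → Y → ℝ} {v : ZMod q} {a : ℝ}
    (h : ∀ x, a ≤ bhat W x (x + v)) : a ≤ Zv W v := by
  have hq : (0 : ℝ) < q := Nat.cast_pos.2 (NeZero.pos q)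
  rw [Zv, one_div, le_inv_mul_iff₀ hq]
  calc (q : ℝ) * a = ∑ _x : ZMod q, a := by simp [ZMod.card]
    _ ≤ ∑ x, bhat W x (x + v) := sum_le_sum fun x _ => h x

end Bhattacharyya

theorem dist_add_nsmul_le {G α : Type*} [AddMonoid G] [PseudoMetricSpace α] {f : G → α} {v : G}
    {C : ℝ} (h : ∀ x, dist (f x) (f (x + v)) ≤ C) (n : ℕ) (x : G) :
    dist (f x) (f (x + n • v)) ≤ n * C := by
  calc dist (f x) (f (x + n • v))
      ≤ ∑ i ∈ range n, dist (f (x + i • v)) (f (x + (i + 1) • v)) := by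
        simpa using dist_le_range_sum_dist (fun i => f (x + i • v)) n
    _ ≤ n * C := by
        simpa using sum_le_card_nsmul (range n) _ C fun i _ => by
          simpa [succ_nsmul, add_assoc] using h (x + i • v)

section Valuation

variable {p r : ℕ} [hp : Fact p.Prime]

theorem ZMod.padicValNat_val_lt {v : ZMod (p ^ r)} (hv : v ≠ 0) : padicValNat p v.val < r :=
  (padicValNat_le_nat_log _).trans_lt <|
    Nat.log_lt_of_lt_pow ((ZMod.val_ne_zero v).2 hv) (ZMod.val_lt v)

theorem ZMod.dvd_pow_padicValNat_val {v : ZMod (p ^ r)} (hv : v ≠ 0) :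
    v ∣ (p : ZMod (p ^ r)) ^ padicValNat p v.val := by
  have hval : v.val ≠ 0 := (ZMod.val_ne_zero v).2 hv
  have hunit : IsUnit ((ordCompl[p] v.val : ℕ) : ZMod (p ^ r)) :=
    (ZMod.isUnit_iff_coprime _ _).2
      ((Nat.coprime_ordCompl hp.out hval).symm.pow_right r)
  rw [← hunit.dvd_mul_right, ← Nat.factorization_def _ hp.out, ← Nat.cast_pow, ← Nat.cast_mul,
    Nat.ordProj_mul_ordCompl_eq_self, ZMod.natCast_zmod_val]

end Valuation

theorem dvd_of_owt_le {r : ℕ} {v v' : ZMod (2 ^ r)} (hv : v ≠ 0) (h : owt r v' ≤ owt r v) :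
    v ∣ v' := by
  have hlt := ZMod.padicValNat_val_lt hv
  have hle : padicValNat 2 v.val ≤ padicValNat 2 v'.val := by
    unfold owt at h
    omega
  refine (ZMod.dvd_pow_padicValNat_val hv).trans ?_
  rw [← ZMod.natCast_zmod_val v', ← Nat.cast_pow]
  exact Nat.cast_dvd_cast ((pow_dvd_pow 2 hle).trans pow_padicValNat_dvd)

theorem Zv_order_domination_general (r : ℕ) {Y : Type*} [Fintype Y]
    (W : ZMod (2 ^ r) → Y → ℝ) (hW : IsDMC W) (v v' : ZMod (2 ^ r)) (hv : v ≠ 0)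
    (hwt : owt r v' ≤ owt r v) (δ' : ℝ) (hδ' : 0 < δ')
    (h : 1 - δ' / (2 ^ r : ℝ) ^ 3 ≤ Zv W v) :
    1 - δ' ≤ Zv W v' := by
  obtain ⟨c, rfl⟩ := dvd_of_owt_le hv hwt
  set g := sqrtEmbedding W
  have hq : (0 : ℝ) < 2 ^ r := by positivity
  have hstep : ∀ x, dist (g x) (g (x + v)) ≤ √(2 * δ') / 2 ^ r := by
    intro x
    have hdeficit : (1 - bhat W x (x + v)) * (2 ^ r) ^ 2 ≤ δ' := by
      have h1 := one_sub_bhat_le_mul_one_sub_Zv hW v x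
      push_cast at h1
      calc (1 - bhat W x (x + v)) * (2 ^ r) ^ 2 ≤ 2 ^ r * (1 - Zv W v) * (2 ^ r) ^ 2 := by gcongr
        _ ≤ 2 ^ r * (δ' / (2 ^ r) ^ 3) * (2 ^ r) ^ 2 := by gcongr; linarith
        _ = δ' := by field_simp
    rw [le_div_iff₀ hq, Real.le_sqrt (by positivity) (by positivity), mul_pow,
      dist_sqrtEmbedding_sq hW]
    linarith
  refine le_Zv_of_forall_le_bhat fun x => ?_
  have hchain : dist (g x) (g (x + v * c)) ≤ √(2 * δ') := calc
    dist (g x) (g (x + v * c)) ≤ c.val * (√(2 * δ') / 2 ^ r) := by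
      simpa [nsmul_eq_mul, mul_comm] using dist_add_nsmul_le hstep c.val x
    _ ≤ 2 ^ r * (√(2 * δ') / 2 ^ r) := by gcongr; exact_mod_cast (ZMod.val_lt c).le
    _ = √(2 * δ') := mul_div_cancel₀ _ hq.ne'
  rw [Real.le_sqrt dist_nonneg (by positivity), dist_sqrtEmbedding_sq hW] at hchain
  linarith

/-- if `wt(v) ≥ wt(v')` and `Z_v(W) ≥ 1 - δ' q^{-3}` then `Z_{v'}(W) ≥ 1 - δ'`. -/
theorem Zv_order_domination (r : ℕ) (hr : 1 ≤ r) {Y : Type*} [Fintype Y] [Nonempty Y]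
    (W : ZMod (2 ^ r) → Y → ℝ) (hW : IsDMC W) (v v' : ZMod (2 ^ r)) (hv : v ≠ 0) (hv' : v' ≠ 0)
    (hwt : owt r v' ≤ owt r v) (δ' : ℝ) (hδ' : 0 < δ')
    (h : 1 - δ' / (2 ^ r : ℝ) ^ 3 ≤ Zv W v) :
    1 - δ' ≤ Zv W v' :=
  Zv_order_domination_general r W hW v v' hv hwt δ' hδ' h
end

section
/- Let W be a q-ary DMC (q = 2^r), let 0 ≤ k ≤ r−1, and let ε > 0. If Z_i(W) < ε for every i with k+1 ≤ i ≤ r, then the restricted channel W^{[r−k]} satisfies Z_i(W^{[r−k]}) < 2^k·ε for every i with 1 ≤ i ≤ r−k. -/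
open Finset

/- Merging the inputs of `W` along the reduction `ZMod (2^r) → ZMod (2^(r-k))` can only lower the
Bhattacharyya parameters: by subadditivity of `√`, `Z_v` of the merged channel is at most the sum of
the `Z_w(W)` over the lifts `w` of `v`. An element of `ZMod (2^r)` has weight `k + i` exactly when
its reduction has weight `i`, since both conditions say that its representative is divisible by
`2^(r-k-i)` but not by `2^(r-k-i+1)`. Hence `Z_i(W^{[r-k]}) ≤ 2^k Z_{k+i}(W)`, the factor `2^k`
coming from the normalisations `2^{-(i-1)}` versus `2^{-(k+i-1)}`. -/

lemma Real.sqrt_sum_le_sum_sqrt {ι : Type*} (s : Finset ι) {f : ι → ℝ}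
    (hf : ∀ i ∈ s, 0 ≤ f i) : √(∑ i ∈ s, f i) ≤ ∑ i ∈ s, √(f i) := by
  refine Real.sqrt_le_iff.mpr ⟨sum_nonneg fun _ _ => Real.sqrt_nonneg _, ?_⟩
  calc ∑ i ∈ s, f i = ∑ i ∈ s, √(f i) ^ 2 := sum_congr rfl fun i hi => (Real.sq_sqrt (hf i hi)).symm
    _ ≤ (∑ i ∈ s, √(f i)) ^ 2 := sum_sq_le_sq_sum_of_nonneg fun _ _ => Real.sqrt_nonneg _

lemma Real.sqrt_sum_mul_sum_le {ι κ : Type*} (s : Finset ι) (t : Finset κ) {f : ι → ℝ}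
    {g : κ → ℝ} (hf : ∀ i ∈ s, 0 ≤ f i) (hg : ∀ j ∈ t, 0 ≤ g j) :
    √((∑ i ∈ s, f i) * ∑ j ∈ t, g j) ≤ ∑ i ∈ s, ∑ j ∈ t, √(f i * g j) := by
  calc √((∑ i ∈ s, f i) * ∑ j ∈ t, g j) = √(∑ i ∈ s, f i) * √(∑ j ∈ t, g j) :=
        Real.sqrt_mul (sum_nonneg hf) _
    _ ≤ (∑ i ∈ s, √(f i)) * ∑ j ∈ t, √(g j) :=
        mul_le_mul (Real.sqrt_sum_le_sum_sqrt s hf) (Real.sqrt_sum_le_sum_sqrt t hg)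
          (Real.sqrt_nonneg _) (sum_nonneg fun _ _ => Real.sqrt_nonneg _)
    _ = ∑ i ∈ s, ∑ j ∈ t, √(f i * g j) := by
        rw [sum_mul_sum]
        exact sum_congr rfl fun i hi => sum_congr rfl fun j _ => (Real.sqrt_mul (hf i hi) _).symm

lemma sum_filter_eq_add_eq {G H F M : Type*} [AddGroup G] [AddGroup H] [Fintype G]
    [DecidableEq H] [FunLike F G H] [AddMonoidHomClass F G H] [AddCommMonoid M] (π : F) (x : G)
    (v : H) (f : G → M) :
    ∑ x' ∈ univ.filter (fun x' => π x' = π x + v), f x' =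
      ∑ w ∈ univ.filter (fun w => π w = v), f (x + w) := by
  refine (sum_equiv (Equiv.addLeft x) (fun w => ?_) fun _ _ => rfl).symm
  simp

section ReduceChannel

variable {m n : ℕ} {Y : Type*} [Fintype Y]

/-- The channel with input `u : ZMod m` obtained by feeding `W` a uniformly random lift of `u`. -/
noncomputable def reduceChannel [NeZero n] (h : m ∣ n) (W : ZMod n → Y → ℝ) : ZMod m → Y → ℝ :=
  fun u y => (m / n : ℝ) * ∑ x ∈ univ.filter (fun x => ZMod.castHom h (ZMod m) x = u), W x y

lemma bhat_reduceChannel_le [NeZero n] (h : m ∣ n) {W : ZMod n → Y → ℝ}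
    (hW : ∀ x y, 0 ≤ W x y) (u u' : ZMod m) :
    bhat (reduceChannel h W) u u' ≤ (m / n : ℝ) *
      ∑ x ∈ univ.filter (fun x => ZMod.castHom h (ZMod m) x = u),
        ∑ x' ∈ univ.filter (fun x' => ZMod.castHom h (ZMod m) x' = u'), bhat W x x' := by
  have hc : (0 : ℝ) ≤ m / n := by positivity
  calc bhat (reduceChannel h W) u u'
      ≤ ∑ y, (m / n : ℝ) * ∑ x ∈ univ.filter (fun x => ZMod.castHom h (ZMod m) x = u),
          ∑ x' ∈ univ.filter (fun x' => ZMod.castHom h (ZMod m) x' = u'), √(W x y * W x' y) := by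
        refine sum_le_sum fun y _ => ?_
        simp only [reduceChannel]
        rw [mul_mul_mul_comm, Real.sqrt_mul (by positivity), Real.sqrt_mul_self hc]
        exact mul_le_mul_of_nonneg_left
          (Real.sqrt_sum_mul_sum_le _ _ (fun x _ => hW x y) fun x _ => hW x y) hc
    _ = _ := by
        simp only [← mul_sum, bhat]
        rw [sum_comm]
        exact congrArg _ (sum_congr rfl fun _ _ => sum_comm)

lemma Zv_reduceChannel_le [NeZero m] [NeZero n] (h : m ∣ n) {W : ZMod n → Y → ℝ}
    (hW : ∀ x y, 0 ≤ W x y) (v : ZMod m) :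
    Zv (reduceChannel h W) v ≤
      ∑ w ∈ univ.filter (fun w => ZMod.castHom h (ZMod m) w = v), Zv W w := by
  set π := ZMod.castHom h (ZMod m)
  calc Zv (reduceChannel h W) v
      ≤ 1 / m * ∑ u, (m / n : ℝ) * ∑ x ∈ univ.filter (fun x => π x = u),
          ∑ x' ∈ univ.filter (fun x' => π x' = u + v), bhat W x x' :=
        mul_le_mul_of_nonneg_left (sum_le_sum fun u _ => bhat_reduceChannel_le h hW u (u + v))
          (by positivity)
    _ = 1 / n * ∑ u, ∑ x ∈ univ.filter (fun x => π x = u),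
          ∑ x' ∈ univ.filter (fun x' => π x' = π x + v), bhat W x x' := by
        rw [← mul_sum, ← mul_assoc]
        congr 1
        · have hm : (m : ℝ) ≠ 0 := NeZero.ne _
          field_simp
        · refine sum_congr rfl fun u _ => sum_congr rfl fun x hx => ?_
          rw [(mem_filter.mp hx).2]
    _ = 1 / n * ∑ x, ∑ w ∈ univ.filter (fun w => π w = v), bhat W x (x + w) := by
        rw [sum_fiberwise univ π
          (fun x => ∑ x' ∈ univ.filter (fun x' => π x' = π x + v), bhat W x x')]
        simp only [sum_filter_eq_add_eq π]
    _ = ∑ w ∈ univ.filter (fun w => π w = v), Zv W w := by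
        rw [sum_comm, mul_sum]
        rfl

end ReduceChannel

lemma ZMod.val_castHom {m n : ℕ} [NeZero n] (h : m ∣ n) (x : ZMod n) :
    (ZMod.castHom h (ZMod m) x).val = x.val % m := by
  rw [ZMod.castHom_apply, ← ZMod.natCast_val, ZMod.val_natCast]

lemma Wres_eq_reduceChannel {r k : ℕ} (hk : k ≤ r) {Y : Type*} [Fintype Y]
    (W : ZMod (2 ^ r) → Y → ℝ) :
    Wres r k W = reduceChannel (pow_dvd_pow 2 (Nat.sub_le r k)) W := by
  ext u y
  have hscale : (((2 ^ (r - k) : ℕ) : ℝ) / ((2 ^ r : ℕ) : ℝ)) = 1 / 2 ^ k := by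
    rw [← Nat.sub_add_cancel hk]
    field_simp
    push_cast
    rw [Nat.add_sub_cancel, pow_add]
  simp only [Wres, reduceChannel, hscale, ← ZMod.val_castHom (pow_dvd_pow 2 (Nat.sub_le r k)),
    (ZMod.val_injective _).eq_iff]

lemma ne_zero_and_owt_eq_iff {r i : ℕ} (hir : i ≤ r) (v : ZMod (2 ^ r)) :
    v ≠ 0 ∧ owt r v = i ↔ 2 ^ (r - i) ∣ v.val ∧ ¬ 2 ^ (r - i + 1) ∣ v.val := by
  have hlt : v.val ≠ 0 → padicValNat 2 v.val < r := fun hv =>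
    (Nat.pow_lt_pow_iff_right (by norm_num)).mp
      ((Nat.le_of_dvd (Nat.pos_of_ne_zero hv) pow_padicValNat_dvd).trans_lt (ZMod.val_lt v))
  rw [← ZMod.val_ne_zero, owt, padicValNat_dvd_iff, padicValNat_dvd_iff]
  constructor
  · rintro ⟨hv, hw⟩
    have := hlt hv
    omega
  · rintro ⟨_, hv⟩
    simp only [not_or, not_le] at hv
    have := hlt hv.1
    omega

lemma castHom_ne_zero_and_owt_eq_iff {r k i : ℕ} (hi : 1 ≤ i) (hkir : k + i ≤ r)
    (w : ZMod (2 ^ r)) :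
    (ZMod.castHom (pow_dvd_pow 2 (Nat.sub_le r k)) (ZMod (2 ^ (r - k))) w ≠ 0 ∧
        owt (r - k) (ZMod.castHom (pow_dvd_pow 2 (Nat.sub_le r k)) (ZMod (2 ^ (r - k))) w) = i) ↔
      w ≠ 0 ∧ owt r w = k + i := by
  rw [ne_zero_and_owt_eq_iff (by omega), ne_zero_and_owt_eq_iff hkir, ZMod.val_castHom,
    Nat.dvd_mod_iff (pow_dvd_pow 2 (by omega)), Nat.dvd_mod_iff (pow_dvd_pow 2 (by omega)),
    show r - k - i = r - (k + i) by omega]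

lemma Zi_Wres_le {r k i : ℕ} {Y : Type*} [Fintype Y] {W : ZMod (2 ^ r) → Y → ℝ}
    (hW : ∀ x y, 0 ≤ W x y) (hi : 1 ≤ i) (hkir : k + i ≤ r) :
    Zi (r - k) (Wres r k W) i ≤ 2 ^ k * Zi r W (k + i) := by
  have hdvd : 2 ^ (r - k) ∣ 2 ^ r := pow_dvd_pow 2 (Nat.sub_le r k)
  have hsum : ∑ v ∈ univ.filter (fun v : ZMod (2 ^ (r - k)) => v ≠ 0 ∧ owt (r - k) v = i),
        Zv (reduceChannel hdvd W) v ≤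
      ∑ w ∈ univ.filter (fun w : ZMod (2 ^ r) => w ≠ 0 ∧ owt r w = k + i), Zv W w := by
    refine (sum_le_sum fun v _ => Zv_reduceChannel_le hdvd hW v).trans_eq ?_
    rw [sum_fiberwise_eq_sum_filter]
    refine sum_congr (filter_congr fun w _ => ?_) fun _ _ => rfl
    simp only [mem_filter, mem_univ, true_and, castHom_ne_zero_and_owt_eq_iff hi hkir]
  have hscale : (2 : ℝ) ^ k * (1 / 2 ^ (k + i - 1)) = 1 / 2 ^ (i - 1) := by
    rw [show k + i - 1 = k + (i - 1) by omega, pow_add]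
    field_simp
  rw [Zi, Zi, Wres_eq_reduceChannel (by omega), ← mul_assoc, hscale]
  exact mul_le_mul_of_nonneg_left hsum (by positivity)

theorem Zi_restricted_channel_general (r : ℕ) {Y : Type*} [Fintype Y]
    (W : ZMod (2 ^ r) → Y → ℝ) (hW : IsDMC W) (k : ℕ)
    (ε : ℝ) (h : ∀ i, k + 1 ≤ i → i ≤ r → Zi r W i < ε) :
    ∀ i, 1 ≤ i → i ≤ r - k → Zi (r - k) (Wres r k W) i < 2 ^ k * ε := by
  intro i hi hir
  calc Zi (r - k) (Wres r k W) i ≤ 2 ^ k * Zi r W (k + i) := Zi_Wres_le hW.1 hi (by omega)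
    _ < 2 ^ k * ε := by gcongr; exact h (k + i) (by omega) (by omega)

/-- if `Z_i(W) < ε` for all `k+1 ≤ i ≤ r`, then `Z_i(W^{[r-k]}) < 2^k ε` for all
`1 ≤ i ≤ r-k`. -/
theorem Zi_restricted_channel (r : ℕ) (hr : 1 ≤ r) {Y : Type*} [Fintype Y] [Nonempty Y]
    (W : ZMod (2 ^ r) → Y → ℝ) (hW : IsDMC W) (k : ℕ) (hk : k ≤ r - 1)
    (ε : ℝ) (hε : 0 < ε) (h : ∀ i, k + 1 ≤ i → i ≤ r → Zi r W i < ε) :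
    ∀ i, 1 ≤ i → i ≤ r - k → Zi (r - k) (Wres r k W) i < 2 ^ k * ε :=
  Zi_restricted_channel_general r W hW k ε h
end
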